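/- arXiv:2407.16203 — 12 statements merged into one kernel-verified Lean document; each statement's English description precedes it below -/
import Mathlib

section
/- For all real numbers α ≥ 1 and all positive integers n, the sum ∑_{k=1}^n (αn)^{-k/(k+1)} is at most (1 + e^{2/e})/√α. -/
open Real Finset

lemma aux_mul_exp_neg_half_le (t : ℝ) (ht : 0 ≤ t) :
    Real.exp 1 / 2 * t * Real.exp (-(t / 2)) ≤ 1 := by
  have h1 : t / 2 ≤ Real.exp (t / 2 - 1) := by
    have := Real.add_one_le_exp (t / 2 - 1); linarith
  have h3 : Real.exp 1 / 2 * t ≤ Real.exp (t / 2) := by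
    calc Real.exp 1 / 2 * t = (t / 2) * Real.exp 1 := by ring
      _ ≤ Real.exp (t / 2 - 1) * Real.exp 1 :=
          mul_le_mul_of_nonneg_right h1 (Real.exp_pos 1).le
      _ = Real.exp (t / 2) := by rw [← Real.exp_add]; ring_nf
  calc Real.exp 1 / 2 * t * Real.exp (-(t / 2))
      ≤ Real.exp (t / 2) * Real.exp (-(t / 2)) :=
        mul_le_mul_of_nonneg_right h3 (Real.exp_pos _).le
    _ = 1 := by rw [← Real.exp_add]; simp

lemma aux_key (n : ℕ) (hn : 1 ≤ n) :
    ∑ k ∈ Finset.Icc 1 n, (n : ℝ) ^ (-(k : ℝ) / (k + 1)) ≤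
      1 + Real.exp (2 / Real.exp 1) := by
  have hn1 : (1 : ℝ) ≤ (n : ℝ) := by exact_mod_cast hn
  have hn0 : (0 : ℝ) < n := by linarith
  set t := Real.log n with htdef
  have ht : 0 ≤ t := Real.log_nonneg hn1
  have hterm : ∀ k : ℕ, (n : ℝ) ^ (-(k : ℝ) / (k + 1)) =
      Real.exp (t * (-(k : ℝ) / (k + 1))) := fun k => Real.rpow_def_of_pos hn0 _
  set p : ℕ → Prop := fun k => ((k : ℝ) + 1) < Real.exp 1 / 2 * t with hp
  classical
  rw [← Finset.sum_filter_add_sum_filter_not (Finset.Icc 1 n) p]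
  have hsum1 : ∑ k ∈ (Finset.Icc 1 n).filter p, (n : ℝ) ^ (-(k : ℝ) / (k + 1)) ≤ 1 := by
    have hb : ∀ k ∈ (Finset.Icc 1 n).filter p,
        (n : ℝ) ^ (-(k : ℝ) / (k + 1)) ≤ Real.exp (-(t / 2)) := by
      intro k hk
      have hk1 : 1 ≤ k := (Finset.mem_Icc.mp (Finset.mem_filter.mp hk).1).1
      have hk1' : (1 : ℝ) ≤ (k : ℝ) := by exact_mod_cast hk1
      have hkk : -(k : ℝ) / ((k : ℝ) + 1) ≤ (-1) / 2 := by
        rw [div_le_div_iff₀ (by positivity) two_pos]; nlinarith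
      rw [hterm k]
      have : t * (-(k : ℝ) / ((k : ℝ) + 1)) ≤ -(t / 2) := by
        have := mul_le_mul_of_nonneg_left hkk ht
        nlinarith
      exact Real.exp_le_exp.mpr this
    have hcard : ((Finset.Icc 1 n).filter p).card ≤ ⌊Real.exp 1 / 2 * t⌋₊ := by
      have hsub : (Finset.Icc 1 n).filter p ⊆ Finset.Icc 1 (⌊Real.exp 1 / 2 * t⌋₊) := by
        intro k hk
        simp only [Finset.mem_filter, Finset.mem_Icc, hp] at hk ⊢
        refine ⟨hk.1.1, Nat.le_floor ?_⟩
        have := hk.2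
        linarith
      simpa using Finset.card_le_card hsub
    calc ∑ k ∈ (Finset.Icc 1 n).filter p, (n : ℝ) ^ (-(k : ℝ) / (k + 1))
        ≤ ((Finset.Icc 1 n).filter p).card • Real.exp (-(t / 2)) :=
          Finset.sum_le_card_nsmul _ _ _ hb
      _ = (((Finset.Icc 1 n).filter p).card : ℝ) * Real.exp (-(t / 2)) := by
          rw [nsmul_eq_mul]
      _ ≤ Real.exp 1 / 2 * t * Real.exp (-(t / 2)) := by
          apply mul_le_mul_of_nonneg_right _ (Real.exp_pos _).le
          calc (((Finset.Icc 1 n).filter p).card : ℝ)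
              ≤ (⌊Real.exp 1 / 2 * t⌋₊ : ℝ) := by exact_mod_cast hcard
            _ ≤ Real.exp 1 / 2 * t := Nat.floor_le (by positivity)
      _ ≤ 1 := aux_mul_exp_neg_half_le t ht
  have hsum2 : ∑ k ∈ (Finset.Icc 1 n).filter (fun k => ¬ p k),
      (n : ℝ) ^ (-(k : ℝ) / (k + 1)) ≤ Real.exp (2 / Real.exp 1) := by
    have hb : ∀ k ∈ (Finset.Icc 1 n).filter (fun k => ¬ p k),
        (n : ℝ) ^ (-(k : ℝ) / (k + 1)) ≤ Real.exp (-t) * Real.exp (2 / Real.exp 1) := by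
      intro k hk
      have hk' := Finset.mem_filter.mp hk
      have hkp : Real.exp 1 / 2 * t ≤ (k : ℝ) + 1 := by
        have := hk'.2
        simp only [hp, not_lt] at this
        exact this
      have hk1 : (0 : ℝ) < (k : ℝ) + 1 := by positivity
      have hdiv : t / ((k : ℝ) + 1) ≤ 2 / Real.exp 1 := by
        rw [div_le_div_iff₀ hk1 (Real.exp_pos 1)]
        nlinarith
      rw [hterm k, ← Real.exp_add]
      apply Real.exp_le_exp.mpr
      have heq : t * (-(k : ℝ) / ((k : ℝ) + 1)) = -t + t / ((k : ℝ) + 1) := by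
        field_simp; ring
      rw [heq]
      linarith
    calc ∑ k ∈ (Finset.Icc 1 n).filter (fun k => ¬ p k), (n : ℝ) ^ (-(k : ℝ) / (k + 1))
        ≤ ((Finset.Icc 1 n).filter (fun k => ¬ p k)).card •
            (Real.exp (-t) * Real.exp (2 / Real.exp 1)) :=
          Finset.sum_le_card_nsmul _ _ _ hb
      _ = (((Finset.Icc 1 n).filter (fun k => ¬ p k)).card : ℝ) *
            (Real.exp (-t) * Real.exp (2 / Real.exp 1)) := by rw [nsmul_eq_mul]
      _ ≤ (n : ℝ) * (Real.exp (-t) * Real.exp (2 / Real.exp 1)) := by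
          apply mul_le_mul_of_nonneg_right _ (by positivity)
          have : ((Finset.Icc 1 n).filter (fun k => ¬ p k)).card ≤ n := by
            calc ((Finset.Icc 1 n).filter (fun k => ¬ p k)).card
                ≤ (Finset.Icc 1 n).card := Finset.card_filter_le _ _
              _ = n := by simp
          exact_mod_cast this
      _ = Real.exp (2 / Real.exp 1) := by
          rw [Real.exp_neg, htdef, Real.exp_log hn0]
          field_simp
  linarith

theorem sum_rpow_bound (α : ℝ) (hα : 1 ≤ α) (n : ℕ) (hn : 1 ≤ n) :
    ∑ k ∈ Finset.Icc 1 n, (α * n) ^ (-(k : ℝ) / (k + 1)) ≤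
      (1 + Real.exp (2 / Real.exp 1)) / Real.sqrt α := by
  have hα0 : (0 : ℝ) < α := lt_of_lt_of_le one_pos hα
  have hn0 : (0 : ℝ) < (n : ℝ) := by exact_mod_cast hn
  have step1 : ∀ k ∈ Finset.Icc 1 n, (α * n) ^ (-(k : ℝ) / (k + 1)) ≤
      α ^ (-(1 : ℝ) / 2) * (n : ℝ) ^ (-(k : ℝ) / (k + 1)) := by
    intro k hk
    have hk1 : 1 ≤ k := (Finset.mem_Icc.mp hk).1
    have hk1' : (1 : ℝ) ≤ (k : ℝ) := by exact_mod_cast hk1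
    rw [Real.mul_rpow hα0.le hn0.le]
    apply mul_le_mul_of_nonneg_right _ (Real.rpow_nonneg hn0.le _)
    apply Real.rpow_le_rpow_of_exponent_le hα
    rw [div_le_div_iff₀ (by positivity) two_pos]
    nlinarith
  calc ∑ k ∈ Finset.Icc 1 n, (α * n) ^ (-(k : ℝ) / (k + 1))
      ≤ ∑ k ∈ Finset.Icc 1 n, α ^ (-(1 : ℝ) / 2) * (n : ℝ) ^ (-(k : ℝ) / (k + 1)) :=
        Finset.sum_le_sum step1
    _ = α ^ (-(1 : ℝ) / 2) * ∑ k ∈ Finset.Icc 1 n, (n : ℝ) ^ (-(k : ℝ) / (k + 1)) := by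
        rw [Finset.mul_sum]
    _ ≤ α ^ (-(1 : ℝ) / 2) * (1 + Real.exp (2 / Real.exp 1)) := by
        apply mul_le_mul_of_nonneg_left (aux_key n hn) (Real.rpow_nonneg hα0.le _)
    _ = (1 + Real.exp (2 / Real.exp 1)) / Real.sqrt α := by
        rw [show (-(1 : ℝ) / 2) = -(1 / 2 : ℝ) by ring, Real.rpow_neg hα0.le,
          Real.sqrt_eq_rpow]
        ring
end

section
/- For all positive integers n, the double sum ∑_{ℓ=1}^n ∑_{k=1}^n (1/n²)^{(ℓ/(ℓ+1))·(k/(k+1))} is at most 1 + 2e^{4/e} + 2e^{8/e} + e^{32/e}. -/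
open Real Finset

lemma mul_exp_le (L a : ℝ) (ha : 0 < a) : L * Real.exp (-(a*L)) ≤ 1/(a*Real.exp 1) := by
  have h := Real.add_one_le_exp (a*L - 1)
  rw [Real.exp_sub] at h
  have hE := Real.exp_pos (a*L)
  have he := Real.exp_pos 1
  have hh : a * L * Real.exp 1 ≤ Real.exp (a*L) := by
    have h2 := mul_le_mul_of_nonneg_right h he.le
    rw [div_mul_cancel₀ _ (ne_of_gt he)] at h2
    linarith
  rw [Real.exp_neg, ← div_eq_mul_inv, div_le_div_iff₀ hE (by positivity)]
  nlinarith

lemma sum_block (n : ℕ) (hn : 1 ≤ n) (b c : ℝ) (hb : 0 < b) (hb2 : b ≤ 2) (hc : 0 < c) :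
    ∑ k ∈ Icc 2 n, Real.exp (-(Real.log n * (((k:ℝ)+1-b)/((k:ℝ)+1)))) ≤
      Real.exp c + (b/c) * (3/((3-b)*Real.exp 1)) := by
  classical
  set L := Real.log n with hLdef
  have hn0 : (0:ℝ) < n := by exact_mod_cast hn
  have hL : 0 ≤ L := Real.log_nonneg (by exact_mod_cast hn)
  have hexpL : Real.exp (-L) = (n:ℝ)⁻¹ := by
    rw [Real.exp_neg, Real.exp_log hn0]
  set P : ℕ → Prop := fun k => ((k:ℝ)+1)*c < b*L with hP
  set f : ℕ → ℝ := fun k => Real.exp (-(L * (((k:ℝ)+1-b)/((k:ℝ)+1)))) with hf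
  rw [show ∑ k ∈ Icc 2 n, Real.exp (-(L * (((k:ℝ)+1-b)/((k:ℝ)+1)))) = ∑ k ∈ Icc 2 n, f k from rfl,
    ← Finset.sum_filter_add_sum_filter_not (Icc 2 n) P f]
  have part1 : ∑ k ∈ (Icc 2 n).filter P, f k ≤ (b/c) * (3/((3-b)*Real.exp 1)) := by
    have hcard : ((((Icc 2 n).filter P).card : ℝ)) ≤ b*L/c := by
      have hsub : (Icc 2 n).filter P ⊆ Icc 2 (⌊b*L/c⌋₊) := by
        intro k hk
        simp only [hP, Finset.mem_filter, Finset.mem_Icc] at hk ⊢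
        refine ⟨hk.1.1, Nat.le_floor ?_⟩
        have h := hk.2
        rw [← lt_div_iff₀ hc] at h
        linarith
      have h2 : (Icc 2 (⌊b*L/c⌋₊)).card ≤ ⌊b*L/c⌋₊ := by rw [Nat.card_Icc]; omega
      calc ((((Icc 2 n).filter P).card : ℝ)) ≤ (⌊b*L/c⌋₊ : ℝ) := by
            exact_mod_cast le_trans (Finset.card_le_card hsub) h2
        _ ≤ b*L/c := Nat.floor_le (by positivity)
    have hterm : ∀ k ∈ (Icc 2 n).filter P, f k ≤ Real.exp (-((3-b)/3 * L)) := by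
      intro k hk
      simp only [hP, Finset.mem_filter, Finset.mem_Icc] at hk
      have hk2 : (2:ℝ) ≤ (k:ℝ) := by exact_mod_cast hk.1.1
      have hkp : (0:ℝ) < (k:ℝ)+1 := by linarith
      apply Real.exp_le_exp.mpr
      have hfrac : (3-b)/3 ≤ ((k:ℝ)+1-b)/((k:ℝ)+1) := by
        rw [div_le_div_iff₀ (by norm_num) hkp]
        nlinarith
      nlinarith
    calc ∑ k ∈ (Icc 2 n).filter P, f k
        ≤ ((((Icc 2 n).filter P).card : ℝ)) * Real.exp (-((3-b)/3 * L)) := by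
          have := Finset.sum_le_card_nsmul _ _ _ hterm
          rwa [nsmul_eq_mul] at this
      _ ≤ (b*L/c) * Real.exp (-((3-b)/3 * L)) :=
          mul_le_mul_of_nonneg_right hcard (Real.exp_pos _).le
      _ = (b/c) * (L * Real.exp (-((3-b)/3 * L))) := by ring
      _ ≤ (b/c) * (1/((3-b)/3 * Real.exp 1)) :=
          mul_le_mul_of_nonneg_left (mul_exp_le L ((3-b)/3) (by linarith)) (by positivity)
      _ = (b/c) * (3/((3-b)*Real.exp 1)) := by
          have h3b : (3-b) ≠ 0 := by linarith
          have he : Real.exp 1 ≠ 0 := (Real.exp_pos 1).ne'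
          congr 1
          field_simp
  have part2 : ∑ k ∈ (Icc 2 n).filter (fun k => ¬ P k), f k ≤ Real.exp c := by
    have hterm : ∀ k ∈ (Icc 2 n).filter (fun k => ¬ P k), f k ≤ Real.exp (c - L) := by
      intro k hk
      simp only [hP, Finset.mem_filter, Finset.mem_Icc, not_lt] at hk
      have hk2 : (2:ℝ) ≤ (k:ℝ) := by exact_mod_cast hk.1.1
      have hkp : (0:ℝ) < (k:ℝ)+1 := by linarith
      apply Real.exp_le_exp.mpr
      have key : b*L/((k:ℝ)+1) ≤ c := by
        rw [div_le_iff₀ hkp]; nlinarith [hk.2]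
      have expand : -(L * (((k:ℝ)+1-b)/((k:ℝ)+1))) = -L + b*L/((k:ℝ)+1) := by
        field_simp
        ring
      rw [expand]
      linarith
    calc ∑ k ∈ (Icc 2 n).filter (fun k => ¬ P k), f k
        ≤ ((((Icc 2 n).filter (fun k => ¬ P k)).card : ℝ)) * Real.exp (c - L) := by
          have := Finset.sum_le_card_nsmul _ _ _ hterm
          rwa [nsmul_eq_mul] at this
      _ ≤ (n:ℝ) * Real.exp (c - L) := by
          apply mul_le_mul_of_nonneg_right _ (Real.exp_pos _).le
          have h1 : ((Icc 2 n).filter (fun k => ¬ P k)).card ≤ (Icc 2 n).card :=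
            Finset.card_le_card (Finset.filter_subset _ _)
          have h2 : (Icc 2 n).card ≤ n := by rw [Nat.card_Icc]; omega
          exact_mod_cast le_trans h1 h2
      _ = Real.exp c := by
          rw [Real.exp_sub, Real.exp_log hn0]
          field_simp
  linarith

lemma num1 : Real.exp 1 + 3/(2*Real.exp 1) ≤ Real.exp (4/Real.exp 1) := by
  have h1 : Real.exp 1 < 2.7182818286 := Real.exp_one_lt_d9
  have h2 : 2.7182818283 < Real.exp 1 := Real.exp_one_gt_d9
  have he := Real.exp_pos 1
  have key : (1.47:ℝ) ≤ 4/Real.exp 1 := by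
    rw [le_div_iff₀ he]; nlinarith
  have e47 : (1.47:ℝ) ≤ Real.exp 0.47 := by
    have := Real.add_one_le_exp (0.47:ℝ); linarith
  have step : Real.exp 1 * 1.47 ≤ Real.exp (4/Real.exp 1) := by
    calc Real.exp 1 * 1.47 ≤ Real.exp 1 * Real.exp 0.47 :=
          mul_le_mul_of_nonneg_left e47 he.le
      _ = Real.exp 1.47 := by rw [← Real.exp_add]; norm_num
      _ ≤ Real.exp (4/Real.exp 1) := Real.exp_le_exp.mpr key
  have lhs : Real.exp 1 + 3/(2*Real.exp 1) ≤ Real.exp 1 * 1.47 := by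
    have hq : 3/(2*Real.exp 1) ≤ 0.56 := by
      rw [div_le_iff₀ (by positivity)]; nlinarith
    nlinarith
  linarith

lemma num2 : Real.exp 5 + 6/(5*Real.exp 1) ≤ Real.exp (16/Real.exp 1) := by
  have h1 : Real.exp 1 < 2.7182818286 := Real.exp_one_lt_d9
  have h2 : 2.7182818283 < Real.exp 1 := Real.exp_one_gt_d9
  have he := Real.exp_pos 1
  have h5 := Real.exp_pos 5
  have key : (5.88:ℝ) ≤ 16/Real.exp 1 := by
    rw [le_div_iff₀ he]; nlinarith
  have e88 : (1.88:ℝ) ≤ Real.exp 0.88 := by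
    have := Real.add_one_le_exp (0.88:ℝ); linarith
  have step : Real.exp 5 * 1.88 ≤ Real.exp (16/Real.exp 1) := by
    calc Real.exp 5 * 1.88 ≤ Real.exp 5 * Real.exp 0.88 :=
          mul_le_mul_of_nonneg_left e88 h5.le
      _ = Real.exp 5.88 := by rw [← Real.exp_add]; norm_num
      _ ≤ Real.exp (16/Real.exp 1) := Real.exp_le_exp.mpr key
  have h15 : Real.exp 1 ≤ Real.exp 5 := Real.exp_le_exp.mpr (by norm_num)
  have lhs : Real.exp 5 + 6/(5*Real.exp 1) ≤ Real.exp 5 * 1.88 := by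
    have hq : 6/(5*Real.exp 1) ≤ 0.45 := by
      rw [div_le_iff₀ (by positivity)]; nlinarith
    nlinarith
  linarith

lemma row_bound (n : ℕ) (hn : 1 ≤ n) :
    ∑ k ∈ Icc 2 n, Real.exp (-(Real.log n * ((k:ℝ)/((k:ℝ)+1)))) ≤ Real.exp (4/Real.exp 1) := by
  have h := sum_block n hn 1 1 one_pos (by norm_num) one_pos
  calc ∑ k ∈ Icc 2 n, Real.exp (-(Real.log n * ((k:ℝ)/((k:ℝ)+1))))
      = ∑ k ∈ Icc 2 n, Real.exp (-(Real.log n * (((k:ℝ)+1-1)/((k:ℝ)+1)))) := by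
        apply Finset.sum_congr rfl; intro k _; congr 1; ring
    _ ≤ Real.exp 1 + (1/1) * (3/((3-1)*Real.exp 1)) := h
    _ = Real.exp 1 + 3/(2*Real.exp 1) := by norm_num
    _ ≤ Real.exp (4/Real.exp 1) := num1

lemma u_bound (n : ℕ) (hn : 1 ≤ n) :
    ∑ k ∈ Icc 2 n, Real.exp (-(Real.log n * (((k:ℝ)-1)/((k:ℝ)+1)))) ≤ Real.exp (16/Real.exp 1) := by
  have h := sum_block n hn 2 5 (by norm_num) (by norm_num) (by norm_num)
  calc ∑ k ∈ Icc 2 n, Real.exp (-(Real.log n * (((k:ℝ)-1)/((k:ℝ)+1))))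
      = ∑ k ∈ Icc 2 n, Real.exp (-(Real.log n * (((k:ℝ)+1-2)/((k:ℝ)+1)))) := by
        apply Finset.sum_congr rfl; intro k _; congr 1; ring
    _ ≤ Real.exp 5 + (2/5) * (3/((3-2)*Real.exp 1)) := h
    _ = Real.exp 5 + 6/(5*Real.exp 1) := by
        congr 1
        rw [show ((3:ℝ)-2) = 1 by norm_num, one_mul]
        field_simp
        ring
    _ ≤ Real.exp (16/Real.exp 1) := num2

theorem double_sum_bound (n : ℕ) (hn : 1 ≤ n) :
    ∑ ℓ ∈ Finset.Icc 1 n, ∑ k ∈ Finset.Icc 1 n,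
        ((1 : ℝ) / n ^ 2) ^ (((ℓ : ℝ) / (ℓ + 1)) * ((k : ℝ) / (k + 1))) ≤
      1 + 2 * Real.exp (4 / Real.exp 1) + 2 * Real.exp (8 / Real.exp 1)
        + Real.exp (32 / Real.exp 1) := by
  have hn0 : (0:ℝ) < n := by exact_mod_cast hn
  set L := Real.log n with hLdef
  have hL : 0 ≤ L := Real.log_nonneg (by exact_mod_cast hn)
  have hterm : ∀ x : ℝ, ((1:ℝ)/(n:ℝ)^2) ^ x = Real.exp (-(2*L) * x) := by
    intro x
    rw [Real.rpow_def_of_pos (by positivity)]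
    congr 1
    rw [one_div, Real.log_inv, Real.log_pow]
    push_cast
    ring
  simp only [hterm]
  have hsplit : Finset.Icc 1 n = insert 1 (Finset.Icc 2 n) := by
    ext x; simp only [Finset.mem_Icc, Finset.mem_insert]; omega
  have h1notin : (1:ℕ) ∉ Finset.Icc 2 n := by simp
  rw [hsplit]
  simp only [Finset.sum_insert h1notin]
  rw [Finset.sum_add_distrib]
  have hA : Real.exp (-(2*L) * (((1:ℕ):ℝ)/(((1:ℕ):ℝ)+1) * (((1:ℕ):ℝ)/(((1:ℕ):ℝ)+1)))) ≤ 1 := by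
    apply Real.exp_le_one_iff.mpr
    push_cast
    nlinarith
  have hB : ∑ k ∈ Finset.Icc 2 n,
      Real.exp (-(2*L) * (((1:ℕ):ℝ)/(((1:ℕ):ℝ)+1) * ((k:ℝ)/((k:ℝ)+1)))) ≤
      Real.exp (4/Real.exp 1) := by
    refine le_trans (le_of_eq ?_) (row_bound n hn)
    apply Finset.sum_congr rfl
    intro k _
    congr 1
    push_cast
    ring
  have hC : ∑ ℓ ∈ Finset.Icc 2 n,
      Real.exp (-(2*L) * ((ℓ:ℝ)/((ℓ:ℝ)+1) * (((1:ℕ):ℝ)/(((1:ℕ):ℝ)+1)))) ≤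
      Real.exp (4/Real.exp 1) := by
    refine le_trans (le_of_eq ?_) (row_bound n hn)
    apply Finset.sum_congr rfl
    intro k _
    congr 1
    push_cast
    ring
  have hD : ∑ ℓ ∈ Finset.Icc 2 n, ∑ k ∈ Finset.Icc 2 n,
      Real.exp (-(2*L) * ((ℓ:ℝ)/((ℓ:ℝ)+1) * ((k:ℝ)/((k:ℝ)+1)))) ≤
      Real.exp (32/Real.exp 1) := by
    have step1 : ∑ ℓ ∈ Finset.Icc 2 n, ∑ k ∈ Finset.Icc 2 n,
        Real.exp (-(2*L) * ((ℓ:ℝ)/((ℓ:ℝ)+1) * ((k:ℝ)/((k:ℝ)+1)))) ≤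
        ∑ ℓ ∈ Finset.Icc 2 n, ∑ k ∈ Finset.Icc 2 n,
        Real.exp (-(L * (((ℓ:ℝ)-1)/((ℓ:ℝ)+1)))) * Real.exp (-(L * (((k:ℝ)-1)/((k:ℝ)+1)))) := by
      apply Finset.sum_le_sum
      intro ℓ hℓ
      apply Finset.sum_le_sum
      intro k hk
      simp only [Finset.mem_Icc] at hℓ hk
      have hx : (2:ℝ) ≤ (ℓ:ℝ) := by exact_mod_cast hℓ.1
      have hy : (2:ℝ) ≤ (k:ℝ) := by exact_mod_cast hk.1
      have hx1 : (0:ℝ) < (ℓ:ℝ)+1 := by linarith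
      have hy1 : (0:ℝ) < (k:ℝ)+1 := by linarith
      rw [← Real.exp_add]
      apply Real.exp_le_exp.mpr
      have hs : ((ℓ:ℝ)-1)/((ℓ:ℝ)+1) + ((k:ℝ)-1)/((k:ℝ)+1) ≤
          2 * ((ℓ:ℝ)/((ℓ:ℝ)+1) * ((k:ℝ)/((k:ℝ)+1))) := by
        rw [div_add_div _ _ hx1.ne' hy1.ne',
          show 2 * ((ℓ:ℝ)/((ℓ:ℝ)+1) * ((k:ℝ)/((k:ℝ)+1))) =
            (2*(ℓ:ℝ)*(k:ℝ))/(((ℓ:ℝ)+1)*((k:ℝ)+1)) by field_simp,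
          div_le_div_iff₀ (by positivity) (by positivity)]
        nlinarith
      nlinarith [mul_le_mul_of_nonneg_left hs hL]
    have step2 : ∑ ℓ ∈ Finset.Icc 2 n, ∑ k ∈ Finset.Icc 2 n,
        Real.exp (-(L * (((ℓ:ℝ)-1)/((ℓ:ℝ)+1)))) * Real.exp (-(L * (((k:ℝ)-1)/((k:ℝ)+1)))) =
        (∑ k ∈ Finset.Icc 2 n, Real.exp (-(L * (((k:ℝ)-1)/((k:ℝ)+1))))) *
        (∑ k ∈ Finset.Icc 2 n, Real.exp (-(L * (((k:ℝ)-1)/((k:ℝ)+1))))) := by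
      rw [Finset.sum_mul_sum]
    have step3 : (∑ k ∈ Finset.Icc 2 n, Real.exp (-(L * (((k:ℝ)-1)/((k:ℝ)+1))))) *
        (∑ k ∈ Finset.Icc 2 n, Real.exp (-(L * (((k:ℝ)-1)/((k:ℝ)+1))))) ≤
        Real.exp (16/Real.exp 1) * Real.exp (16/Real.exp 1) := by
      apply mul_le_mul (u_bound n hn) (u_bound n hn)
        (Finset.sum_nonneg fun k _ => (Real.exp_pos _).le) (Real.exp_pos _).le
    have step4 : Real.exp (16/Real.exp 1) * Real.exp (16/Real.exp 1) =
        Real.exp (32/Real.exp 1) := by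
      rw [← Real.exp_add, ← add_div]
      norm_num
    calc _ ≤ _ := step1
      _ = _ := step2
      _ ≤ _ := step3
      _ = _ := step4
  have h8 := Real.exp_pos (8/Real.exp 1)
  linarith
end

section
/- Let N be a nonnegative integer and define F(x) = ∑_{j=−N}^N exp(−c(j−x)²) for a constant c > 0. Then there exists c₀ > 0 independent of N such that for all c ≥ c₀, F attains its global maximum over the reals at x = 0. -/
open Real Finset

private lemma my_icc_top (a b : ℤ) (h : a ≤ b + 1) :
    Finset.Icc a (b + 1) = insert (b + 1) (Finset.Icc a b) := by
  ext j
  simp only [Finset.mem_Icc, Finset.mem_insert]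
  omega

private lemma my_icc_bot (a b : ℤ) (h : a ≤ b + 1) :
    Finset.Icc a (b + 1) = insert a (Finset.Icc (a + 1) (b + 1)) := by
  ext j
  simp only [Finset.mem_Icc, Finset.mem_insert]
  omega

private lemma window_shift (f : ℤ → ℝ) (a b : ℤ) (h : a ≤ b + 1) :
    ∑ j ∈ Finset.Icc (a + 1) (b + 1), f j + f a
      = ∑ j ∈ Finset.Icc a b, f j + f (b + 1) := by
  have h1 : ∑ j ∈ Finset.Icc a (b + 1), f j = f (b + 1) + ∑ j ∈ Finset.Icc a b, f j := by
    rw [my_icc_top a b h, Finset.sum_insert (by simp only [Finset.mem_Icc]; omega)]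
  have h2 : ∑ j ∈ Finset.Icc a (b + 1), f j
      = f a + ∑ j ∈ Finset.Icc (a + 1) (b + 1), f j := by
    rw [my_icc_bot a b h, Finset.sum_insert (by simp only [Finset.mem_Icc]; omega)]
  linarith

private lemma window_mono (c u : ℝ) (hc : 0 ≤ c) (hu0 : 0 ≤ u) (hu : u ≤ 1/2)
    (N : ℕ) (σ : ℤ) :
    ∑ j ∈ Finset.Icc (-(N:ℤ) + σ) ((N:ℤ) + σ), Real.exp (-c * ((j:ℝ) - u) ^ 2)
      ≤ ∑ j ∈ Finset.Icc (-(N:ℤ)) (N:ℤ), Real.exp (-c * ((j:ℝ) - u) ^ 2) := by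
  set f : ℤ → ℝ := fun j => Real.exp (-c * ((j:ℝ) - u) ^ 2) with hf
  have hN : (0:ℝ) ≤ (N:ℝ) := Nat.cast_nonneg N
  have aux1 : ∀ n : ℕ, ∑ j ∈ Finset.Icc (-(N:ℤ) + n) ((N:ℤ) + n), f j
      ≤ ∑ j ∈ Finset.Icc (-(N:ℤ)) (N:ℤ), f j := by
    intro n
    induction n with
    | zero => simp
    | succ m ih =>
        refine le_trans ?_ ih
        have hcast : ((m + 1 : ℕ):ℤ) = (m:ℤ) + 1 := by push_cast; ring
        rw [hcast]
        have e1 : -(N:ℤ) + ((m:ℤ) + 1) = (-(N:ℤ) + m) + 1 := by ring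
        have e2 : (N:ℤ) + ((m:ℤ) + 1) = ((N:ℤ) + m) + 1 := by ring
        rw [e1, e2]
        have hw := window_shift f (-(N:ℤ) + m) ((N:ℤ) + m) (by omega)
        have hstep : f ((N:ℤ) + m + 1) ≤ f (-(N:ℤ) + m) := by
          simp only [hf]
          apply Real.exp_le_exp.mpr
          have hm : (0:ℝ) ≤ (m:ℝ) := Nat.cast_nonneg m
          push_cast
          nlinarith [mul_nonneg (mul_nonneg hc (by linarith : (0:ℝ) ≤ 2*(m:ℝ) + 1 - 2*u))
            (by linarith : (0:ℝ) ≤ 2*(N:ℝ) + 1)]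
        linarith
  have aux2 : ∀ n : ℕ, ∑ j ∈ Finset.Icc (-(N:ℤ) + (-(n:ℤ))) ((N:ℤ) + (-(n:ℤ))), f j
      ≤ ∑ j ∈ Finset.Icc (-(N:ℤ)) (N:ℤ), f j := by
    intro n
    induction n with
    | zero => simp
    | succ m ih =>
        refine le_trans ?_ ih
        have hcast : ((m + 1 : ℕ):ℤ) = (m:ℤ) + 1 := by push_cast; ring
        rw [hcast]
        have e1 : -(N:ℤ) + -((m:ℤ) + 1) = (-(N:ℤ) + -(m:ℤ) - 1) + 1 - 1 := by ring
        have e2 : (N:ℤ) + -((m:ℤ) + 1) = ((N:ℤ) + -(m:ℤ) - 1) + 1 - 1 := by ring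
        rw [e1, e2]
        simp only [add_sub_cancel_right]
        have hw := window_shift f (-(N:ℤ) + -(m:ℤ) - 1) ((N:ℤ) + -(m:ℤ) - 1) (by omega)
        have hab1 : -(N:ℤ) + -(m:ℤ) - 1 + 1 = -(N:ℤ) + -(m:ℤ) := by ring
        have hab2 : (N:ℤ) + -(m:ℤ) - 1 + 1 = (N:ℤ) + -(m:ℤ) := by ring
        rw [hab1, hab2] at hw
        have hstep : f (-(N:ℤ) + -(m:ℤ) - 1) ≤ f ((N:ℤ) + -(m:ℤ)) := by
          simp only [hf]
          apply Real.exp_le_exp.mpr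
          have hm : (0:ℝ) ≤ (m:ℝ) := Nat.cast_nonneg m
          push_cast
          nlinarith [mul_nonneg (mul_nonneg hc (by linarith : (0:ℝ) ≤ 2*(m:ℝ) + 1 + 2*u))
            (by linarith : (0:ℝ) ≤ 2*(N:ℝ) + 1)]
        linarith
  rcases Int.natAbs_eq σ with h | h
  · rw [h]; exact aux1 σ.natAbs
  · rw [h]; exact aux2 σ.natAbs

private lemma sum_icc_pair (h : ℤ → ℝ) (N : ℕ) :
    ∑ j ∈ Finset.Icc (-(N:ℤ)) (N:ℤ), h j
      = h 0 + ∑ i ∈ Finset.range N, (h ((i:ℤ) + 1) + h (-((i:ℤ) + 1))) := by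
  induction N with
  | zero => simp
  | succ n ih =>
      have e1 : Finset.Icc (-(n+1:ℕ):ℤ) ((n+1:ℕ):ℤ)
          = insert (-((n:ℤ) + 1)) (insert ((n:ℤ) + 1) (Finset.Icc (-(n:ℤ)) (n:ℤ))) := by
        ext j
        simp only [Finset.mem_Icc, Finset.mem_insert]
        push_cast
        omega
      rw [e1, Finset.sum_insert (by simp only [Finset.mem_insert, Finset.mem_Icc]; omega),
        Finset.sum_insert (by simp only [Finset.mem_Icc]; omega), ih, Finset.sum_range_succ]
      ring

private lemma exp_inv_le (a b : ℝ) (hb : b ≤ Real.exp a) (hb0 : 0 < b) :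
    Real.exp (-a) ≤ 1 / b := by
  have h1 : Real.exp (-a) * Real.exp a = 1 := by rw [← Real.exp_add]; simp
  have h2 : 0 < Real.exp a := Real.exp_pos a
  rw [le_div_iff₀ hb0]
  nlinarith [Real.exp_pos (-a)]


private lemma exp_half_bound (c : ℝ) (hc : 50 ≤ c) : 16 * c * Real.exp (-c/2) ≤ 3/4 := by
  have hc0 : (0:ℝ) < c := by linarith
  have hx : c/8 ≤ Real.exp (c/8) := by
    have := Real.add_one_le_exp (c/8); linarith
  have hx4 : (c/8)^4 ≤ Real.exp (c/8) ^ 4 := pow_le_pow_left₀ (by linarith) hx 4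
  have hx5 : Real.exp (c/8) ^ 4 = Real.exp (c/2) := by
    rw [← Real.exp_nat_mul]; congr 1; ring
  have hce : (c/8)^4 ≤ Real.exp (c/2) := by rw [← hx5]; exact hx4
  have hprod : Real.exp (c/2) * Real.exp (-c/2) = 1 := by
    rw [← Real.exp_add]
    have : c/2 + -c/2 = 0 := by ring
    rw [this, Real.exp_zero]
  have t := mul_le_mul_of_nonneg_right hce (Real.exp_nonneg (-c/2))
  have hkey : c^4 * Real.exp (-c/2) ≤ 4096 := by
    rw [hprod] at t
    nlinarith [t]
  have hc3 : (125000:ℝ) ≤ c^3 := by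
    have := pow_le_pow_left₀ (by norm_num : (0:ℝ) ≤ 50) hc 3
    norm_num at this
    linarith
  have h3 : 16 * c * Real.exp (-c/2) * c^3 ≤ 65536 := by nlinarith [hkey]
  nlinarith [h3, hc3, mul_nonneg (mul_nonneg (by norm_num : (0:ℝ) ≤ 16) hc0.le)
    (Real.exp_nonneg (-c/2))]

private lemma exp_quarter_bound (c : ℝ) (hc : 50 ≤ c) : 4 * Real.exp (-c/4) ≤ 1/5 := by
  have hx : c/8 ≤ Real.exp (c/8) := by
    have := Real.add_one_le_exp (c/8); linarith
  have hx2 : (c/8)^2 ≤ Real.exp (c/8) ^ 2 := pow_le_pow_left₀ (by linarith) hx 2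
  have hx5 : Real.exp (c/8) ^ 2 = Real.exp (c/4) := by
    rw [← Real.exp_nat_mul]; congr 1; ring
  have hce : (c/8)^2 ≤ Real.exp (c/4) := by rw [← hx5]; exact hx2
  have h20 : (20:ℝ) ≤ Real.exp (c/4) := by nlinarith
  have hprod : Real.exp (c/4) * Real.exp (-c/4) = 1 := by
    rw [← Real.exp_add]
    have : c/4 + -c/4 = 0 := by ring
    rw [this, Real.exp_zero]
  nlinarith [Real.exp_nonneg (-c/4), h20, hprod]

private lemma pair_large (c u : ℝ) (hc : 50 ≤ c) (hu0 : 0 ≤ u) (hu : u ≤ 1/2) (i : ℕ) :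
    Real.exp (-c * (((i:ℝ) + 1) - u) ^ 2) + Real.exp (-c * ((-((i:ℝ) + 1)) - u) ^ 2)
      ≤ 2 * Real.exp (-c/4) * (1/2:ℝ) ^ i := by
  have hi : (0:ℝ) ≤ (i:ℝ) := Nat.cast_nonneg i
  have h1 : Real.exp (-c * (((i:ℝ) + 1) - u) ^ 2) ≤ Real.exp (-c/4 + -c * i) := by
    apply Real.exp_le_exp.mpr
    nlinarith [mul_nonneg (by linarith : (0:ℝ) ≤ c) (sq_nonneg ((i:ℝ) + 1/2 - u)),
      mul_nonneg (by linarith : (0:ℝ) ≤ c) (mul_nonneg hi hi),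
      mul_nonneg (by linarith : (0:ℝ) ≤ c) (mul_nonneg hi (by linarith : (0:ℝ) ≤ 1/2 - u))]
  have h2 : Real.exp (-c * ((-((i:ℝ) + 1)) - u) ^ 2) ≤ Real.exp (-c/4 + -c * i) := by
    apply Real.exp_le_exp.mpr
    nlinarith [mul_nonneg (by linarith : (0:ℝ) ≤ c) (mul_nonneg hi hi),
      mul_nonneg (by linarith : (0:ℝ) ≤ c) (mul_nonneg hi hu0),
      mul_nonneg (by linarith : (0:ℝ) ≤ c) (mul_nonneg (by linarith : (0:ℝ) ≤ (i:ℝ) + 1) hu0)]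
  have h3 : Real.exp (-c/4 + -c * i) = Real.exp (-c/4) * Real.exp (-c) ^ i := by
    rw [Real.exp_add]
    congr 1
    rw [← Real.exp_nat_mul]
    congr 1
    ring
  have hec : Real.exp (-c) ≤ 1/2 := by
    have h5 : Real.exp (-c) ≤ Real.exp (-1) := Real.exp_le_exp.mpr (by linarith)
    have h6 : Real.exp (-1) ≤ 1/2 := by
      apply exp_inv_le 1 2 _ (by norm_num)
      have := Real.add_one_le_exp 1
      linarith
    linarith
  have h4 : Real.exp (-c) ^ i ≤ (1/2:ℝ) ^ i :=
    pow_le_pow_left₀ (Real.exp_nonneg _) hec i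
  calc Real.exp (-c * (((i:ℝ) + 1) - u) ^ 2) + Real.exp (-c * ((-((i:ℝ) + 1)) - u) ^ 2)
      ≤ Real.exp (-c/4 + -c * i) + Real.exp (-c/4 + -c * i) := add_le_add h1 h2
    _ = 2 * (Real.exp (-c/4) * Real.exp (-c) ^ i) := by rw [h3]; ring
    _ ≤ 2 * (Real.exp (-c/4) * (1/2:ℝ) ^ i) := by
        have := mul_le_mul_of_nonneg_left h4 (Real.exp_nonneg (-c/4))
        linarith
    _ = 2 * Real.exp (-c/4) * (1/2:ℝ) ^ i := by ring

private lemma pair_deficit (c u k : ℝ) (hc : 50 ≤ c) (hu0 : 0 ≤ u) (hu4 : u ≤ 1/4)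
    (hk1 : 1 ≤ k) :
    Real.exp (-c * (k - u) ^ 2) + Real.exp (-c * ((-k) - u) ^ 2)
      - 2 * Real.exp (-c * k ^ 2)
      ≤ 4 * c^2 * u^2 * (k^2 * Real.exp (-c * k^2 / 2)) := by
  have hc0 : (0:ℝ) < c := by linarith
  have hv0 : (0:ℝ) ≤ 2*c*k*u := by positivity
  have e1 : Real.exp (-c * (k - u)^2)
      = Real.exp (-c*k^2) * Real.exp (-c*u^2) * Real.exp (2*c*k*u) := by
    rw [← Real.exp_add, ← Real.exp_add]; congr 1; ring
  have e2 : Real.exp (-c * ((-k) - u)^2)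
      = Real.exp (-c*k^2) * Real.exp (-c*u^2) * Real.exp (-(2*c*k*u)) := by
    rw [← Real.exp_add, ← Real.exp_add]; congr 1; ring
  have hP : (0:ℝ) < Real.exp (-c*k^2) := Real.exp_pos _
  have hQ : Real.exp (-c*u^2) ≤ 1 := by
    rw [show (1:ℝ) = Real.exp 0 by simp]
    apply Real.exp_le_exp.mpr
    have : 0 ≤ c * u^2 := by positivity
    linarith
  have hE1 : (1:ℝ) ≤ Real.exp (2*c*k*u) := by
    have := Real.add_one_le_exp (2*c*k*u); linarith
  have hE'0 : (0:ℝ) < Real.exp (-(2*c*k*u)) := Real.exp_pos _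
  have h1mv : 1 - Real.exp (-(2*c*k*u)) ≤ 2*c*k*u := by
    have := Real.add_one_le_exp (-(2*c*k*u)); linarith
  have h1m0 : 0 ≤ 1 - Real.exp (-(2*c*k*u)) := by
    have : Real.exp (-(2*c*k*u)) ≤ 1 := by
      rw [show (1:ℝ) = Real.exp 0 by simp]
      exact Real.exp_le_exp.mpr (by linarith)
    linarith
  have hsq : Real.exp (2*c*k*u) + Real.exp (-(2*c*k*u)) - 2
      = Real.exp (2*c*k*u) * (1 - Real.exp (-(2*c*k*u)))^2 := by
    rw [Real.exp_neg]
    have hEne : Real.exp (2*c*k*u) ≠ 0 := (Real.exp_pos _).ne'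
    field_simp
    ring
  have hsq2 : (1 - Real.exp (-(2*c*k*u)))^2 ≤ (2*c*k*u)^2 :=
    pow_le_pow_left₀ h1m0 h1mv 2
  have hbound1 : Real.exp (2*c*k*u) + Real.exp (-(2*c*k*u)) - 2
      ≤ Real.exp (2*c*k*u) * (2*c*k*u)^2 := by
    rw [hsq]
    exact mul_le_mul_of_nonneg_left hsq2 (Real.exp_pos _).le
  have step1 : Real.exp (-c * (k - u)^2) + Real.exp (-c * ((-k) - u)^2)
      - 2 * Real.exp (-c*k^2)
      ≤ Real.exp (-c*k^2) * (Real.exp (2*c*k*u) * (2*c*k*u)^2) := by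
    rw [e1, e2]
    have hpos : 0 ≤ Real.exp (2*c*k*u) + Real.exp (-(2*c*k*u)) := by linarith
    have expand : Real.exp (-c*k^2) * Real.exp (-c*u^2) * Real.exp (2*c*k*u)
        + Real.exp (-c*k^2) * Real.exp (-c*u^2) * Real.exp (-(2*c*k*u))
        - 2 * Real.exp (-c*k^2)
        ≤ Real.exp (-c*k^2) * (Real.exp (2*c*k*u) + Real.exp (-(2*c*k*u)) - 2) := by
      linarith [mul_nonneg (mul_nonneg hP.le
        (by linarith : (0:ℝ) ≤ 1 - Real.exp (-c*u^2))) hpos]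
    refine le_trans expand ?_
    exact mul_le_mul_of_nonneg_left hbound1 hP.le
  have step2 : Real.exp (-c*k^2) * (Real.exp (2*c*k*u) * (2*c*k*u)^2)
      ≤ 4*c^2*u^2 * (k^2 * Real.exp (-c*k^2/2)) := by
    have hvsq : Real.exp (-c*k^2) * Real.exp (2*c*k*u) = Real.exp (-c*k^2 + 2*c*k*u) := by
      rw [← Real.exp_add]
    have h1 : 0 ≤ c * (k * (k - 4*u)) :=
      mul_nonneg hc0.le (mul_nonneg (by linarith) (by linarith))
    have hle : Real.exp (-c*k^2 + 2*c*k*u) ≤ Real.exp (-c*k^2/2) := by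
      apply Real.exp_le_exp.mpr
      nlinarith [h1]
    calc Real.exp (-c*k^2) * (Real.exp (2*c*k*u) * (2*c*k*u)^2)
        = Real.exp (-c*k^2 + 2*c*k*u) * (2*c*k*u)^2 := by rw [← hvsq]; ring
      _ ≤ Real.exp (-c*k^2/2) * (2*c*k*u)^2 :=
          mul_le_mul_of_nonneg_right hle (sq_nonneg _)
      _ = 4*c^2*u^2 * (k^2 * Real.exp (-c*k^2/2)) := by ring
  have := le_trans step1 step2
  calc Real.exp (-c * (k - u) ^ 2) + Real.exp (-c * ((-k) - u) ^ 2)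
      - 2 * Real.exp (-c * k ^ 2)
      ≤ 4*c^2*u^2 * (k^2 * Real.exp (-c*k^2/2)) := this
    _ = 4 * c^2 * u^2 * (k^2 * Real.exp (-c * k^2 / 2)) := by ring

private lemma kexp_bound (c : ℝ) (hc : 50 ≤ c) (i : ℕ) :
    ((i:ℝ) + 1)^2 * Real.exp (-c * ((i:ℝ)+1)^2 / 2)
      ≤ 2 * Real.exp (-c/2) * (1/2:ℝ)^i := by
  have hi : (0:ℝ) ≤ (i:ℝ) := Nat.cast_nonneg i
  have hsplit : Real.exp (-c * ((i:ℝ)+1)^2 / 2)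
      = Real.exp (-c/2) * Real.exp (-c*(((i:ℝ)+1)^2-1)/2) := by
    rw [← Real.exp_add]; congr 1; ring
  rw [hsplit]
  have hgoal : ((i:ℝ)+1)^2 * Real.exp (-c*(((i:ℝ)+1)^2-1)/2) ≤ 2 * (1/2:ℝ)^i := by
    rcases Nat.eq_zero_or_pos i with hi0 | hip
    · subst hi0
      norm_num
    · have hi1 : (1:ℝ) ≤ (i:ℝ) := by exact_mod_cast hip
      have hkpow : (i:ℝ) + 1 ≤ (2:ℝ)^i := by
        have : i < 2 ^ i := Nat.lt_two_pow_self
        have h' : (i:ℝ) + 1 ≤ ((2^i : ℕ):ℝ) := by exact_mod_cast this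
        simpa using h'
      have hk2 : ((i:ℝ)+1)^2 ≤ (4:ℝ)^i := by
        have h2 : ((i:ℝ)+1)^2 ≤ ((2:ℝ)^i)^2 := by nlinarith
        have h3 : ((2:ℝ)^i)^2 = (4:ℝ)^i := by
          rw [← pow_mul, mul_comm, pow_mul]; norm_num
        linarith
      have hexp75 : Real.exp (-c*(((i:ℝ)+1)^2-1)/2) ≤ Real.exp (-(75:ℝ)*i) := by
        apply Real.exp_le_exp.mpr
        nlinarith [mul_nonneg (by linarith : (0:ℝ) ≤ c - 50)
          (by nlinarith : (0:ℝ) ≤ (i:ℝ)^2 + 2*i),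
          mul_nonneg (by linarith : (0:ℝ) ≤ (i:ℝ) - 1) hi]
      have hexp75' : Real.exp (-(75:ℝ)*i) = Real.exp (-75) ^ i := by
        rw [← Real.exp_nat_mul]; congr 1; ring
      have he75 : Real.exp (-75) ≤ (1/8:ℝ) := by
        have h8 : (8:ℝ) ≤ Real.exp 75 := by
          have := Real.add_one_le_exp (75:ℝ); linarith
        have := exp_inv_le 75 8 h8 (by norm_num)
        linarith
      have hpow : Real.exp (-75) ^ i ≤ (1/8:ℝ)^i :=
        pow_le_pow_left₀ (Real.exp_nonneg _) he75 i
      calc ((i:ℝ)+1)^2 * Real.exp (-c*(((i:ℝ)+1)^2-1)/2)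
          ≤ (4:ℝ)^i * (1/8:ℝ)^i := by
            apply mul_le_mul hk2 _ (Real.exp_nonneg _) (by positivity)
            rw [hexp75'] at hexp75
            exact le_trans hexp75 hpow
        _ = (1/2:ℝ)^i := by rw [← mul_pow]; norm_num
        _ ≤ 2 * (1/2:ℝ)^i := by nlinarith [pow_pos (by norm_num : (0:ℝ) < 1/2) i]
  calc ((i:ℝ)+1)^2 * (Real.exp (-c/2) * Real.exp (-c*(((i:ℝ)+1)^2-1)/2))
      = Real.exp (-c/2) * (((i:ℝ)+1)^2 * Real.exp (-c*(((i:ℝ)+1)^2-1)/2)) := by ring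
    _ ≤ Real.exp (-c/2) * (2 * (1/2:ℝ)^i) :=
        mul_le_mul_of_nonneg_left hgoal (Real.exp_nonneg _)
    _ = 2 * Real.exp (-c/2) * (1/2:ℝ)^i := by ring

private lemma pair_small (c u : ℝ) (hc : 50 ≤ c) (hu0 : 0 ≤ u) (hsm : c * u ^ 2 ≤ 1/4)
    (i : ℕ) :
    Real.exp (-c * (((i:ℝ) + 1) - u) ^ 2) + Real.exp (-c * ((-((i:ℝ) + 1)) - u) ^ 2)
      - 2 * Real.exp (-c * ((i:ℝ) + 1) ^ 2)
      ≤ 8 * c^2 * u^2 * Real.exp (-c/2) * (1/2:ℝ) ^ i := by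
  have hi : (0:ℝ) ≤ (i:ℝ) := Nat.cast_nonneg i
  have hc0 : (0:ℝ) < c := by linarith
  have hu4 : u ≤ 1/4 := by nlinarith [sq_nonneg (u - 1/4)]
  have h1 := pair_deficit c u ((i:ℝ)+1) hc hu0 hu4 (by linarith)
  have h2 := kexp_bound c hc i
  have h3 : 4 * c^2 * u^2 * (((i:ℝ)+1)^2 * Real.exp (-c * ((i:ℝ)+1)^2 / 2))
      ≤ 4 * c^2 * u^2 * (2 * Real.exp (-c/2) * (1/2:ℝ)^i) :=
    mul_le_mul_of_nonneg_left h2 (by positivity)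
  calc Real.exp (-c * (((i:ℝ) + 1) - u) ^ 2) + Real.exp (-c * ((-((i:ℝ) + 1)) - u) ^ 2)
      - 2 * Real.exp (-c * ((i:ℝ) + 1) ^ 2)
      ≤ 4 * c^2 * u^2 * (((i:ℝ)+1)^2 * Real.exp (-c * ((i:ℝ)+1)^2 / 2)) := h1
    _ ≤ 4 * c^2 * u^2 * (2 * Real.exp (-c/2) * (1/2:ℝ)^i) := h3
    _ = 8 * c^2 * u^2 * Real.exp (-c/2) * (1/2:ℝ)^i := by ring

private lemma core_ineq (c u : ℝ) (hc : 50 ≤ c) (hu0 : 0 ≤ u) (hu : u ≤ 1/2) (N : ℕ) :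
    ∑ j ∈ Finset.Icc (-(N:ℤ)) (N:ℤ), Real.exp (-c * ((j:ℝ) - u) ^ 2)
      ≤ ∑ j ∈ Finset.Icc (-(N:ℤ)) (N:ℤ), Real.exp (-c * ((j:ℝ) - 0) ^ 2) := by
  have hc0 : (0:ℝ) < c := by linarith
  rw [sum_icc_pair (fun j => Real.exp (-c * ((j:ℝ) - u) ^ 2)) N,
    sum_icc_pair (fun j => Real.exp (-c * ((j:ℝ) - 0) ^ 2)) N]
  beta_reduce
  have hL0 : Real.exp (-c * (((0:ℤ):ℝ) - u) ^ 2) = Real.exp (-c * u^2) := by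
    congr 1; push_cast; ring
  have hR0 : Real.exp (-c * (((0:ℤ):ℝ) - 0) ^ 2) = 1 := by
    norm_num
  rw [hL0, hR0]
  -- rewrite summands with real casts
  have hcastL : ∀ i ∈ Finset.range N,
      Real.exp (-c * ((((i:ℤ) + 1 : ℤ):ℝ) - u) ^ 2)
        + Real.exp (-c * (((-((i:ℤ) + 1) : ℤ):ℝ) - u) ^ 2)
      = Real.exp (-c * (((i:ℝ) + 1) - u) ^ 2)
        + Real.exp (-c * ((-((i:ℝ) + 1)) - u) ^ 2) := by
    intro i _
    congr 2 <;> push_cast <;> ring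
  have hcastR : ∀ i ∈ Finset.range N,
      Real.exp (-c * ((((i:ℤ) + 1 : ℤ):ℝ) - 0) ^ 2)
        + Real.exp (-c * (((-((i:ℤ) + 1) : ℤ):ℝ) - 0) ^ 2)
      = 2 * Real.exp (-c * ((i:ℝ) + 1) ^ 2) := by
    intro i _
    have : Real.exp (-c * ((((i:ℤ) + 1 : ℤ):ℝ) - 0) ^ 2)
        = Real.exp (-c * ((i:ℝ) + 1) ^ 2) := by congr 1; push_cast; ring
    have h2 : Real.exp (-c * (((-((i:ℤ) + 1) : ℤ):ℝ) - 0) ^ 2)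
        = Real.exp (-c * ((i:ℝ) + 1) ^ 2) := by congr 1; push_cast; ring
    rw [this, h2]; ring
  rw [Finset.sum_congr rfl hcastL, Finset.sum_congr rfl hcastR]
  -- suffices: sum of differences ≤ 1 - exp(-c u²)
  have key : ∑ i ∈ Finset.range N,
        ((Real.exp (-c * (((i:ℝ) + 1) - u) ^ 2)
          + Real.exp (-c * ((-((i:ℝ) + 1)) - u) ^ 2))
         - 2 * Real.exp (-c * ((i:ℝ) + 1) ^ 2))
      ≤ 1 - Real.exp (-c * u^2) := by
    rcases le_or_gt (c * u^2) (1/4) with hsm | hlg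
    · -- small regime
      have hsum : ∑ i ∈ Finset.range N,
            ((Real.exp (-c * (((i:ℝ) + 1) - u) ^ 2)
              + Real.exp (-c * ((-((i:ℝ) + 1)) - u) ^ 2))
             - 2 * Real.exp (-c * ((i:ℝ) + 1) ^ 2))
          ≤ ∑ i ∈ Finset.range N, 8 * c^2 * u^2 * Real.exp (-c/2) * (1/2:ℝ)^i := by
        apply Finset.sum_le_sum
        intro i _
        exact pair_small c u hc hu0 hsm i
      have hgeom : ∑ i ∈ Finset.range N, 8 * c^2 * u^2 * Real.exp (-c/2) * (1/2:ℝ)^i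
          ≤ 16 * c^2 * u^2 * Real.exp (-c/2) := by
        rw [← Finset.mul_sum]
        have := sum_geometric_two_le N
        have h8 : (0:ℝ) ≤ 8 * c^2 * u^2 * Real.exp (-c/2) := by positivity
        nlinarith
      -- 16 c² u² exp(-c/2) ≤ (3/4) c u² ≤ 1 - exp(-c u²)
      have hA : 16 * c^2 * u^2 * Real.exp (-c/2) ≤ (3/4) * (c * u^2) := by
        have hu2 : (0:ℝ) ≤ u^2 := sq_nonneg u
        have hfinal := exp_half_bound c hc
        have := mul_le_mul_of_nonneg_right hfinal (mul_nonneg hc0.le hu2)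
        nlinarith [this]
      have hB : (3/4) * (c * u^2) ≤ 1 - Real.exp (-c * u^2) := by
        set w : ℝ := c * u^2 with hw
        have hw0 : 0 ≤ w := by positivity
        have hw4 : w ≤ 1/4 := hsm
        have hexpw : Real.exp (-w) * Real.exp w = 1 := by rw [← Real.exp_add]; simp
        have h1w : 1 + w ≤ Real.exp w := by have := Real.add_one_le_exp w; linarith
        have hEw : Real.exp (-w) ≤ 1/(1+w) := by
          rw [le_div_iff₀ (by linarith)]
          nlinarith [Real.exp_pos (-w)]
        have : -c * u^2 = -w := by rw [hw]; ring
        rw [this]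
        have h1w0 : (0:ℝ) < 1 + w := by linarith
        have : 1/(1+w) ≤ 1 - (3/4)*w := by
          rw [div_le_iff₀ h1w0]
          nlinarith
        linarith
      linarith
    · -- large regime
      have hsum : ∑ i ∈ Finset.range N,
            ((Real.exp (-c * (((i:ℝ) + 1) - u) ^ 2)
              + Real.exp (-c * ((-((i:ℝ) + 1)) - u) ^ 2))
             - 2 * Real.exp (-c * ((i:ℝ) + 1) ^ 2))
          ≤ ∑ i ∈ Finset.range N, 2 * Real.exp (-c/4) * (1/2:ℝ)^i := by
        apply Finset.sum_le_sum
        intro i _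
        have := pair_large c u hc hu0 hu i
        have hpos : (0:ℝ) < Real.exp (-c * ((i:ℝ) + 1) ^ 2) := Real.exp_pos _
        linarith
      have hgeom : ∑ i ∈ Finset.range N, 2 * Real.exp (-c/4) * (1/2:ℝ)^i
          ≤ 4 * Real.exp (-c/4) := by
        rw [← Finset.mul_sum]
        have := sum_geometric_two_le N
        have h2 : (0:ℝ) ≤ 2 * Real.exp (-c/4) := by positivity
        nlinarith
      have hA : 4 * Real.exp (-c/4) ≤ 1/5 := exp_quarter_bound c hc
      have hB : Real.exp (-c * u^2) ≤ 4/5 := by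
        have h1 : Real.exp (-c * u^2) ≤ Real.exp (-(1/4)) := by
          apply Real.exp_le_exp.mpr
          nlinarith
        have h2 : Real.exp (-(1/4)) ≤ 4/5 := by
          have hb : (5/4:ℝ) ≤ Real.exp (1/4) := by
            have := Real.add_one_le_exp (1/4:ℝ); linarith
          have := exp_inv_le (1/4) (5/4) hb (by norm_num)
          norm_num at this
          linarith
        linarith
      linarith
  have hsub : ∑ i ∈ Finset.range N,
        ((Real.exp (-c * (((i:ℝ) + 1) - u) ^ 2)
          + Real.exp (-c * ((-((i:ℝ) + 1)) - u) ^ 2))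
         - 2 * Real.exp (-c * ((i:ℝ) + 1) ^ 2))
      = ∑ i ∈ Finset.range N,
          (Real.exp (-c * (((i:ℝ) + 1) - u) ^ 2)
            + Real.exp (-c * ((-((i:ℝ) + 1)) - u) ^ 2))
        - ∑ i ∈ Finset.range N, 2 * Real.exp (-c * ((i:ℝ) + 1) ^ 2) := by
    rw [← Finset.sum_sub_distrib]
  rw [hsub] at key
  linarith

theorem gaussian_sum_max_at_zero :
    ∃ c₀ : ℝ, 0 < c₀ ∧ ∀ (N : ℕ) (c : ℝ), c₀ ≤ c → ∀ x : ℝ,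
      ∑ j ∈ Finset.Icc (-(N : ℤ)) (N : ℤ), Real.exp (-c * ((j : ℝ) - x) ^ 2) ≤
        ∑ j ∈ Finset.Icc (-(N : ℤ)) (N : ℤ), Real.exp (-c * ((j : ℝ) - 0) ^ 2) := by
  refine ⟨50, by norm_num, ?_⟩
  intro N c hc x
  have hc0 : (0:ℝ) ≤ c := by linarith
  set s : ℤ := round x with hs
  have habs : |x - (s:ℝ)| ≤ 1/2 := by
    rw [hs]
    exact abs_sub_round x
  rcases le_total x (s:ℝ) with hle | hge
  · -- x ≤ s : u = s - x, shift σ = s, reindex j ↦ s - j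
    set u : ℝ := (s:ℝ) - x with hudef
    have hu0 : 0 ≤ u := by rw [hudef]; linarith
    have hu : u ≤ 1/2 := by
      rw [hudef]
      rw [abs_le] at habs
      linarith
    have hre : ∑ j ∈ Finset.Icc (-(N:ℤ)) (N:ℤ), Real.exp (-c * ((j:ℝ) - x) ^ 2)
        = ∑ j ∈ Finset.Icc (-(N:ℤ) + s) ((N:ℤ) + s), Real.exp (-c * ((j:ℝ) - u) ^ 2) := by
      apply Finset.sum_nbij' (fun j => s - j) (fun j => s - j)
      · intro a ha
        simp only [Finset.mem_Icc] at ha ⊢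
        omega
      · intro a ha
        simp only [Finset.mem_Icc] at ha ⊢
        omega
      · intro a _; omega
      · intro a _; omega
      · intro a _
        congr 1
        push_cast
        rw [hudef]
        ring
    rw [hre]
    exact le_trans (window_mono c u hc0 hu0 hu N s)
      (core_ineq c u (by linarith) hu0 hu N)
  · -- s ≤ x : u = x - s, shift σ = -s, reindex j ↦ j - s
    set u : ℝ := x - (s:ℝ) with hudef
    have hu0 : 0 ≤ u := by rw [hudef]; linarith
    have hu : u ≤ 1/2 := by
      rw [hudef]
      rw [abs_le] at habs
      linarith
    have hre : ∑ j ∈ Finset.Icc (-(N:ℤ)) (N:ℤ), Real.exp (-c * ((j:ℝ) - x) ^ 2)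
        = ∑ j ∈ Finset.Icc (-(N:ℤ) + (-s)) ((N:ℤ) + (-s)), Real.exp (-c * ((j:ℝ) - u) ^ 2) := by
      apply Finset.sum_nbij' (fun j => j - s) (fun j => j + s)
      · intro a ha
        simp only [Finset.mem_Icc] at ha ⊢
        omega
      · intro a ha
        simp only [Finset.mem_Icc] at ha ⊢
        omega
      · intro a _; omega
      · intro a _; omega
      · intro a _
        congr 1
        push_cast
        rw [hudef]
        ring
    rw [hre]
    exact le_trans (window_mono c u hc0 hu0 hu N (-s))
      (core_ineq c u (by linarith) hu0 hu N)
end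

section
/- Let N ∈ ℕ, c > 0 be large enough, and x ∈ (−1/2, 1/2]. With F(x) = ∑_{j=−N}^N exp(−c(j−x)²), we have F(x) > F(x+k) for every positive integer k, and F(x) ≥ F(x−1) > F(x−2) > ⋯, i.e., F restricted to translates of x by integers is maximized on (−1/2, 1/2]. -/
open Real Finset

theorem gaussian_sum_integer_translates (N : ℕ) (c : ℝ) (hc : 0 < c)
    (x : ℝ) (hx₁ : -1/2 < x) (hx₂ : x ≤ 1/2)
    (F : ℝ → ℝ)
    (hF : F = fun y => ∑ j ∈ Finset.Icc (-(N : ℤ)) (N : ℤ),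
      Real.exp (-c * ((j : ℝ) - y) ^ 2)) :
    (∀ k : ℕ, 1 ≤ k → F (x + k) > F (x + (k + 1))) ∧
    (∀ k : ℕ, 1 ≤ k → F x > F (x + k)) ∧
    F x ≥ F (x - 1) ∧
    (∀ k : ℕ, 1 ≤ k → F (x - k) > F (x - (k + 1))) := by
  set f : ℤ → ℝ := fun j => Real.exp (-c * ((j : ℝ) - x) ^ 2) with hf
  set G : ℤ → ℝ := fun m => ∑ j ∈ Finset.Icc (-(N:ℤ) - m) ((N:ℤ) - m), f j with hG
  have hFG : ∀ m : ℤ, F (x + m) = G m := by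
    intro m
    rw [hF, hG]
    simp only
    rw [show Finset.Icc (-(N:ℤ) - m) ((N:ℤ) - m)
        = (Finset.Icc (-(N:ℤ)) (N:ℤ)).map (addRightEmbedding (-m)) by
      rw [Finset.map_add_right_Icc]; congr 1 <;> ring]
    rw [Finset.sum_map]
    apply Finset.sum_congr rfl
    intro j _
    simp only [addRightEmbedding_apply, hf]
    push_cast
    ring_nf
  have hdiff : ∀ a b : ℤ, a ≤ b →
      (∑ j ∈ Finset.Icc a b, f j) - (∑ j ∈ Finset.Icc (a-1) (b-1), f j)
        = f b - f (a-1) := by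
    intro a b hab
    have h1 : Finset.Icc a b = insert b (Finset.Icc a (b-1)) := by
      ext j; simp only [Finset.mem_Icc, Finset.mem_insert]; omega
    have h2 : Finset.Icc (a-1) (b-1) = insert (a-1) (Finset.Icc a (b-1)) := by
      ext j; simp only [Finset.mem_Icc, Finset.mem_insert]; omega
    rw [h1, h2, Finset.sum_insert (by simp only [Finset.mem_Icc]; omega),
        Finset.sum_insert (by simp only [Finset.mem_Icc]; omega)]
    ring
  have hup : ∀ m : ℤ, 0 ≤ m → G m > G (m + 1) := by
    intro m hm
    have h := hdiff (-(N:ℤ) - m) ((N:ℤ) - m) (by omega)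
    have hGdiff : G m - G (m+1) = f ((N:ℤ) - m) - f (-(N:ℤ) - m - 1) := by
      rw [hG]; simp only
      rw [show -(N:ℤ) - (m+1) = -(N:ℤ) - m - 1 by ring,
          show (N:ℤ) - (m+1) = (N:ℤ) - m - 1 by ring]
      exact h
    have hlt : f (-(N:ℤ) - m - 1) < f ((N:ℤ) - m) := by
      rw [hf]; simp only
      apply Real.exp_lt_exp.mpr
      have hm' : (0:ℝ) ≤ (m:ℝ) := by exact_mod_cast hm
      have hN' : (0:ℝ) ≤ (N:ℝ) := Nat.cast_nonneg N
      push_cast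
      have e : (-c * ((N:ℝ) - m - x)^2) - (-c * (-(N:ℝ) - m - 1 - x)^2)
          = c * ((2*(N:ℝ)+1) * (2*(m:ℝ)+1+2*x)) := by ring
      have p1 : (0:ℝ) < 2*(N:ℝ)+1 := by linarith
      have p2 : (0:ℝ) < 2*(m:ℝ)+1+2*x := by linarith
      nlinarith [mul_pos hc (mul_pos p1 p2)]
    linarith
  have hdownd : ∀ m : ℤ, G m - G (m - 1) = f (-(N:ℤ) - m) - f ((N:ℤ) - m + 1) := by
    intro m
    have h := hdiff (-(N:ℤ) - m + 1) ((N:ℤ) - m + 1) (by omega)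
    rw [show -(N:ℤ) - m + 1 - 1 = -(N:ℤ) - m by ring,
        show (N:ℤ) - m + 1 - 1 = (N:ℤ) - m by ring] at h
    rw [hG]; simp only
    rw [show -(N:ℤ) - (m-1) = -(N:ℤ) - m + 1 by ring,
        show (N:ℤ) - (m-1) = (N:ℤ) - m + 1 by ring]
    linarith
  have hdownle : G (-1) ≤ G 0 := by
    have h := hdownd 0
    have hle : f ((N:ℤ) - 0 + 1) ≤ f (-(N:ℤ) - 0) := by
      rw [hf]; simp only
      apply Real.exp_le_exp.mpr
      have hN' : (0:ℝ) ≤ (N:ℝ) := Nat.cast_nonneg N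
      push_cast
      have e : (-c * (-(N:ℝ) - 0 - x)^2) - (-c * ((N:ℝ) - 0 + 1 - x)^2)
          = c * ((2*(N:ℝ)+1) * (1-2*x)) := by ring
      have p1 : (0:ℝ) ≤ 2*(N:ℝ)+1 := by linarith
      have p2 : (0:ℝ) ≤ 1-2*x := by linarith
      nlinarith [mul_nonneg hc.le (mul_nonneg p1 p2)]
    have : (0:ℤ) - 1 = -1 := by ring
    rw [this] at h
    linarith
  have hdownlt : ∀ m : ℤ, m ≤ -1 → G (m - 1) < G m := by
    intro m hm
    have h := hdownd m
    have hlt : f ((N:ℤ) - m + 1) < f (-(N:ℤ) - m) := by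
      rw [hf]; simp only
      apply Real.exp_lt_exp.mpr
      have hm' : (m:ℝ) ≤ -1 := by exact_mod_cast hm
      have hN' : (0:ℝ) ≤ (N:ℝ) := Nat.cast_nonneg N
      push_cast
      have e : (-c * (-(N:ℝ) - m - x)^2) - (-c * ((N:ℝ) - m + 1 - x)^2)
          = c * ((2*(N:ℝ)+1) * (1-2*(m:ℝ)-2*x)) := by ring
      have p1 : (0:ℝ) < 2*(N:ℝ)+1 := by linarith
      have p2 : (0:ℝ) < 1-2*(m:ℝ)-2*x := by linarith
      nlinarith [mul_pos hc (mul_pos p1 p2)]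
    linarith
  have hFx : F x = G 0 := by
    have := hFG 0
    simpa using this
  refine ⟨?_, ?_, ?_, ?_⟩
  · intro k hk
    have h1 : F (x + (k:ℝ)) = G (k:ℤ) := by
      have := hFG (k:ℤ); push_cast at this ⊢; exact this
    have h2 : F (x + ((k:ℝ) + 1)) = G ((k:ℤ) + 1) := by
      have := hFG ((k:ℤ) + 1); push_cast at this ⊢; exact this
    rw [h1, h2]
    exact hup k (by positivity)
  · intro k hk
    have key : ∀ n : ℕ, 1 ≤ n → G 0 > G (n:ℤ) := by
      intro n hn
      induction n with
      | zero => omega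
      | succ p ih =>
        rcases Nat.eq_or_lt_of_le hn with h | h
        · have : (p:ℤ) + 1 = 1 := by omega
          rw [show ((p+1:ℕ):ℤ) = (p:ℤ)+1 by push_cast; ring, this]
          simpa using hup 0 le_rfl
        · have hp : 1 ≤ p := by omega
          have := ih hp
          have step := hup (p:ℤ) (by positivity)
          rw [show ((p+1:ℕ):ℤ) = (p:ℤ)+1 by push_cast; ring]
          linarith
    have h1 : F (x + (k:ℝ)) = G (k:ℤ) := by
      have := hFG (k:ℤ); push_cast at this ⊢; exact this
    rw [hFx, h1]
    exact key k hk
  · have h1 : F (x - 1) = G (-1) := by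
      have := hFG (-1); push_cast at this ⊢
      rw [show x + (-1:ℝ) = x - 1 by ring] at this
      exact this
    rw [hFx, h1]
    exact hdownle
  · intro k hk
    have h1 : F (x - (k:ℝ)) = G (-(k:ℤ)) := by
      have := hFG (-(k:ℤ)); push_cast at this ⊢
      rw [show x + -(k:ℝ) = x - k by ring] at this
      exact this
    have h2 : F (x - ((k:ℝ) + 1)) = G (-(k:ℤ) - 1) := by
      have := hFG (-(k:ℤ) - 1); push_cast at this ⊢
      rw [show x + (-(k:ℝ) - 1) = x - ((k:ℝ) + 1) by ring] at this
      exact this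
    rw [h1, h2]
    have : (-(k:ℤ)) - 1 = (-(k:ℤ)) - 1 := rfl
    exact hdownlt (-(k:ℤ)) (by omega)
end

section
/- Let n ≥ 2, let Γ be the (n−1)×(n−1) matrix with diagonal 1 and off-diagonal −1/(n−1), and for y ∈ ℝ^{n−1} let μ_k(y) = (1/k)∑_{j=1}^{k−1} y_j for k = 2,…,n−1. Then yᵀΓy = (n/(n−1))·( (1/2)y₁² + ∑_{k=2}^{n−1} (k/(k+1))·(y_k − μ_k(y))² ). -/
open Matrix Finset

lemma range_key (m : ℕ) (Y : ℕ → ℝ) :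
    ∑ k ∈ Finset.range m, ((k + 1 : ℝ) / (k + 2)) *
        (Y k - (1 / (k + 1 : ℝ)) * ∑ j ∈ Finset.range k, Y j) ^ 2 =
      ∑ k ∈ Finset.range m, (Y k) ^ 2 -
        (∑ k ∈ Finset.range m, Y k) ^ 2 / (m + 1) := by
  induction m with
  | zero => simp
  | succ m ih =>
    rw [Finset.sum_range_succ, ih, Finset.sum_range_succ (fun k => (Y k) ^ 2),
      Finset.sum_range_succ Y]
    have h1 : (m : ℝ) + 1 ≠ 0 := by positivity
    have h2 : (m : ℝ) + 2 ≠ 0 := by positivity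
    push_cast
    field_simp
    ring

lemma fin_key (m : ℕ) (y : Fin m → ℝ) :
    ∑ k : Fin m, (((k : ℕ) + 1 : ℝ) / ((k : ℕ) + 2)) *
        (y k - (1 / ((k : ℕ) + 1 : ℝ)) * ∑ j ∈ Finset.Iio k, y j) ^ 2 =
      ∑ k : Fin m, (y k) ^ 2 - (∑ k : Fin m, y k) ^ 2 / (m + 1) := by
  set Y : ℕ → ℝ := fun i => if h : i < m then y ⟨i, h⟩ else 0 with hY
  have hYy : ∀ k : Fin m, Y (k : ℕ) = y k := by
    intro k; simp [hY, k.isLt]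
  have hIio : ∀ k : Fin m, ∑ j ∈ Finset.Iio k, y j = ∑ j ∈ Finset.range (k : ℕ), Y j := by
    intro k
    rw [← Nat.Iio_eq_range, ← Fin.map_valEmbedding_Iio, Finset.sum_map]
    exact Finset.sum_congr rfl fun j _ => (hYy j).symm
  have h1 : ∑ k : Fin m, (((k : ℕ) + 1 : ℝ) / ((k : ℕ) + 2)) *
        (y k - (1 / ((k : ℕ) + 1 : ℝ)) * ∑ j ∈ Finset.Iio k, y j) ^ 2 =
      ∑ k ∈ Finset.range m, ((k + 1 : ℝ) / (k + 2)) *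
        (Y k - (1 / (k + 1 : ℝ)) * ∑ j ∈ Finset.range k, Y j) ^ 2 := by
    rw [← Fin.sum_univ_eq_sum_range]
    exact Finset.sum_congr rfl fun k _ => by rw [hIio, hYy]
  have h2 : ∑ k ∈ Finset.range m, Y k = ∑ k : Fin m, y k := by
    rw [← Fin.sum_univ_eq_sum_range]
    exact Finset.sum_congr rfl fun k _ => hYy k
  have h3 : ∑ k ∈ Finset.range m, (Y k) ^ 2 = ∑ k : Fin m, (y k) ^ 2 := by
    rw [← Fin.sum_univ_eq_sum_range]
    exact Finset.sum_congr rfl fun k _ => by rw [hYy]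
  rw [h1, range_key, h2, h3]

theorem gamma_quadratic_form (n : ℕ) (hn : 2 ≤ n)
    (Γ : Matrix (Fin (n - 1)) (Fin (n - 1)) ℝ)
    (hΓ : Γ = Matrix.of fun i j => if i = j then (1 : ℝ) else -1 / (n - 1))
    (y : Fin (n - 1) → ℝ) :
    y ⬝ᵥ Γ.mulVec y =
      ((n : ℝ) / (n - 1)) *
        ∑ k : Fin (n - 1),
          (((k : ℕ) + 1 : ℝ) / ((k : ℕ) + 2)) *
            (y k - (1 / ((k : ℕ) + 1 : ℝ)) * ∑ j ∈ Finset.Iio k, y j) ^ 2 := by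
  subst hΓ
  have hcast : ((n - 1 : ℕ) : ℝ) = (n : ℝ) - 1 := by
    have : (1 : ℕ) ≤ n := by omega
    push_cast [this]; ring
  have hne : (n : ℝ) - 1 ≠ 0 := by
    have h2 : (2 : ℝ) ≤ (n : ℝ) := by exact_mod_cast hn
    linarith
  have hnne : (n : ℝ) ≠ 0 := by
    have h2 : (2 : ℝ) ≤ (n : ℝ) := by exact_mod_cast hn
    linarith
  set S : ℝ := ∑ k : Fin (n - 1), y k with hS
  set A : ℝ := ∑ k : Fin (n - 1), (y k) ^ 2 with hA
  have hLHS : y ⬝ᵥ (Matrix.of fun i j => if i = j then (1 : ℝ) else -1 / (n - 1)).mulVec y =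
      (1 + 1 / ((n : ℝ) - 1)) * A - (1 / ((n : ℝ) - 1)) * S ^ 2 := by
    simp only [dotProduct, mulVec, Matrix.of_apply]
    have key : ∀ i : Fin (n - 1),
        ∑ j : Fin (n - 1), (if i = j then (1 : ℝ) else -1 / (n - 1)) * y j =
          (1 + 1 / ((n : ℝ) - 1)) * y i - (1 / ((n : ℝ) - 1)) * S := by
      intro i
      have : ∀ j : Fin (n - 1), (if i = j then (1 : ℝ) else -1 / (n - 1)) * y j =
          (if i = j then (1 + 1 / ((n : ℝ) - 1)) * y j else 0) + (-1 / ((n : ℝ) - 1)) * y j := by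
        intro j
        by_cases h : i = j <;> simp [h] <;> field_simp <;> ring
      rw [Finset.sum_congr rfl fun j _ => this j, Finset.sum_add_distrib,
        Finset.sum_ite_eq Finset.univ i, if_pos (Finset.mem_univ i), ← Finset.mul_sum, ← hS]
      ring
    rw [Finset.sum_congr rfl fun i _ => by rw [key i]]
    have : ∀ i : Fin (n - 1), y i * ((1 + 1 / ((n : ℝ) - 1)) * y i - (1 / ((n : ℝ) - 1)) * S) =
        (1 + 1 / ((n : ℝ) - 1)) * (y i) ^ 2 - (1 / ((n : ℝ) - 1)) * S * y i := by
      intro i; ring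
    rw [Finset.sum_congr rfl fun i _ => this i, Finset.sum_sub_distrib, ← Finset.mul_sum,
      ← Finset.mul_sum, ← hA, ← hS]
    ring
  rw [hLHS, fin_key, ← hS, ← hA, hcast]
  have hn1 : (n : ℝ) - 1 + 1 = n := by ring
  rw [hn1]
  field_simp
  ring
end

section
/- Let θ ∈ [−π, π]^{n−1} with ‖θ‖_∞ ≥ π/2, and suppose the set 𝒜 = {j : |θ_j| ≥ 1} satisfies |𝒜| ≥ (n−1)/2. Then (1/C(n,2))·(∑_{j=1}^{n−1} cos(θ_j) + ∑_{1≤k<j≤n−1} cos(θ_j − θ_k)) ≤ 1 − (1 − cos(1))/n. -/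
open Real Finset

theorem charfun_bound_many_large (n : ℕ) (hn : 2 ≤ n)
    (θ : Fin (n - 1) → ℝ)
    (hθ : ∀ j, |θ j| ≤ Real.pi)
    (hsup : ∃ j, Real.pi / 2 ≤ |θ j|)
    (hA : ((n : ℝ) - 1) / 2 ≤
      ((Finset.univ.filter fun j => 1 ≤ |θ j|).card : ℝ)) :
    (1 / (n.choose 2 : ℝ)) *
        ((∑ j, Real.cos (θ j)) +
          ∑ j, ∑ k ∈ Finset.Iio j, Real.cos (θ j - θ k)) ≤
      1 - (1 - Real.cos 1) / n := by
  have hn1 : (1:ℕ) ≤ n := by omega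
  have hm1 : 1 ≤ n - 1 := by omega
  have hmn : ((n - 1 : ℕ) : ℝ) = (n:ℝ) - 1 := by
    rw [Nat.cast_sub hn1]; norm_num
  set c := Real.cos 1 with hc
  have hc1 : c ≤ 1 := Real.cos_le_one 1
  set A := (Finset.univ.filter fun j : Fin (n-1) => 1 ≤ |θ j|) with hAset
  set Ac := (Finset.univ.filter fun j : Fin (n-1) => ¬ (1 ≤ |θ j|)) with hAcset
  have hcard : A.card + Ac.card = n - 1 := by
    rw [hAset, hAcset, Finset.card_filter_add_card_filter_not]
    simp
  -- bound on sum of cos θ j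
  have hSA : ∑ j ∈ A, Real.cos (θ j) ≤ (A.card : ℝ) * c := by
    have := Finset.sum_le_card_nsmul A (fun j => Real.cos (θ j)) c ?_
    · simpa [nsmul_eq_mul] using this
    · intro j hj
      rw [hAset, Finset.mem_filter] at hj
      show Real.cos (θ j) ≤ c
      rw [← Real.cos_abs]
      exact Real.cos_le_cos_of_nonneg_of_le_pi (by norm_num) (hθ j) hj.2
  have hSAc : ∑ j ∈ Ac, Real.cos (θ j) ≤ (Ac.card : ℝ) * 1 := by
    have := Finset.sum_le_card_nsmul Ac (fun j => Real.cos (θ j)) 1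
      (fun j _ => Real.cos_le_one _)
    simpa [nsmul_eq_mul] using this
  have h1 : (∑ j, Real.cos (θ j)) ≤ (A.card : ℝ) * c + (Ac.card : ℝ) := by
    have hsplit : (∑ j, Real.cos (θ j)) =
        ∑ j ∈ A, Real.cos (θ j) + ∑ j ∈ Ac, Real.cos (θ j) :=
      (Finset.sum_filter_add_sum_filter_not Finset.univ _ _).symm
    rw [hsplit]; linarith
  -- bound on double sum
  have hgauss : (∑ i ∈ Finset.range (n-1), (i:ℝ)) = ((n:ℝ)-1) * ((n:ℝ)-2) / 2 := by
    have := Finset.sum_range_id_mul_two (n-1)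
    have h2 : ((∑ i ∈ Finset.range (n-1), i : ℕ) : ℝ) * 2 = ((n-1:ℕ):ℝ) * ((n-1-1:ℕ):ℝ) := by
      exact_mod_cast congrArg (Nat.cast : ℕ → ℝ) this
    push_cast at h2
    have e1 : ((n-1:ℕ):ℝ) = (n:ℝ)-1 := hmn
    have e2 : ((n-1-1:ℕ):ℝ) = (n:ℝ)-2 := by
      have : n - 1 - 1 = n - 2 := by omega
      rw [this, Nat.cast_sub hn]; norm_num
    rw [e1, e2] at h2
    push_cast
    linarith
  have h2 : (∑ j, ∑ k ∈ Finset.Iio j, Real.cos (θ j - θ k)) ≤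
      ((n:ℝ)-1) * ((n:ℝ)-2) / 2 := by
    calc (∑ j, ∑ k ∈ Finset.Iio j, Real.cos (θ j - θ k))
        ≤ ∑ j : Fin (n-1), ∑ k ∈ Finset.Iio j, (1:ℝ) := by
          apply Finset.sum_le_sum; intro j _
          exact Finset.sum_le_sum fun k _ => Real.cos_le_one _
      _ = ∑ j : Fin (n-1), ((j:ℕ):ℝ) := by
          simp [Fin.card_Iio]
      _ = ∑ i ∈ Finset.range (n-1), (i:ℝ) := by
          rw [Fin.sum_univ_eq_sum_range (fun i => (i:ℝ))]
      _ = ((n:ℝ)-1) * ((n:ℝ)-2) / 2 := hgauss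
  -- choose
  have hchoose : (n.choose 2 : ℝ) = (n:ℝ) * ((n:ℝ)-1) / 2 := by
    rw [Nat.cast_choose_two]
  have hnpos : (0:ℝ) < n := by positivity
  have hn1pos : (0:ℝ) < (n:ℝ) - 1 := by
    have : (2:ℝ) ≤ n := by exact_mod_cast hn
    linarith
  have hCpos : (0:ℝ) < (n.choose 2 : ℝ) := by rw [hchoose]; positivity
  -- card relation in ℝ
  have hcardR : (A.card : ℝ) + (Ac.card : ℝ) = (n:ℝ) - 1 := by
    rw [← hmn]; exact_mod_cast hcard
  -- key bound on total sum
  have hkey : (∑ j, Real.cos (θ j)) +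
      (∑ j, ∑ k ∈ Finset.Iio j, Real.cos (θ j - θ k)) ≤
      (n.choose 2 : ℝ) - ((n:ℝ)-1)/2 * (1 - c) := by
    have hAcard : ((n:ℝ)-1)/2 ≤ (A.card : ℝ) := hA
    have h1c : 0 ≤ 1 - c := by linarith
    have : (A.card:ℝ) * c + (Ac.card:ℝ) = ((n:ℝ)-1) - (A.card:ℝ) * (1 - c) := by
      linarith [hcardR]
    have hmul : ((n:ℝ)-1)/2 * (1-c) ≤ (A.card:ℝ) * (1-c) :=
      mul_le_mul_of_nonneg_right hAcard h1c
    rw [hchoose]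
    nlinarith [h1, h2]
  have hfin : 1/(n.choose 2:ℝ) * ((n.choose 2:ℝ) - ((n:ℝ)-1)/2*(1-c)) = 1 - (1-c)/(n:ℝ) := by
    rw [hchoose]; field_simp
  calc (1 / (n.choose 2 : ℝ)) *
        ((∑ j, Real.cos (θ j)) +
          ∑ j, ∑ k ∈ Finset.Iio j, Real.cos (θ j - θ k))
      ≤ 1/(n.choose 2:ℝ) * ((n.choose 2:ℝ) - ((n:ℝ)-1)/2*(1-c)) := by
        apply mul_le_mul_of_nonneg_left hkey (by positivity)
    _ = 1 - (1-c)/(n:ℝ) := hfin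
end

section
/- Let θ ∈ [−π, π]^{n−1} with ‖θ‖_∞ ≥ π/2, and suppose the set 𝒜 = {j : |θ_j| ≥ 1} satisfies |𝒜| ≤ (n−1)/2. Then (1/C(n,2))·(∑_{j=1}^{n−1} cos(θ_j) + ∑_{1≤k<j≤n−1} cos(θ_j − θ_k)) ≤ 1 − (1 − cos(π/2 − 1))/n. -/
open Real Finset

lemma cos_key {x : ℝ} (h1 : Real.pi / 2 - 1 ≤ |x|) (h2 : |x| ≤ Real.pi + 1) :
    Real.cos x ≤ Real.cos (Real.pi / 2 - 1) := by
  rw [← Real.cos_abs]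
  rcases le_or_gt |x| Real.pi with h | h
  · exact Real.cos_le_cos_of_nonneg_of_le_pi (by nlinarith [Real.pi_gt_three]) h h1
  · have h3 : Real.cos |x| ≤ 0 :=
      Real.cos_nonpos_of_pi_div_two_le_of_le (by nlinarith [Real.pi_gt_three])
        (by nlinarith [Real.pi_gt_three])
    have h4 : 0 ≤ Real.cos (Real.pi / 2 - 1) :=
      Real.cos_nonneg_of_mem_Icc ⟨by nlinarith [Real.pi_gt_three], by nlinarith [Real.pi_gt_three]⟩
    linarith

theorem charfun_bound_few_large (n : ℕ) (hn : 2 ≤ n)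
    (θ : Fin (n - 1) → ℝ)
    (hθ : ∀ j, |θ j| ≤ Real.pi)
    (hsup : ∃ j, Real.pi / 2 ≤ |θ j|)
    (hA : ((Finset.univ.filter fun j => 1 ≤ |θ j|).card : ℝ) ≤
      ((n : ℝ) - 1) / 2) :
    (1 / (n.choose 2 : ℝ)) *
        ((∑ j, Real.cos (θ j)) +
          ∑ j, ∑ k ∈ Finset.Iio j, Real.cos (θ j - θ k)) ≤
      1 - (1 - Real.cos (Real.pi / 2 - 1)) / n := by
  obtain ⟨j₀, hj₀⟩ := hsup
  set c := Real.cos (Real.pi / 2 - 1) with hc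
  have hπ := Real.pi_gt_three
  have hc1 : c ≤ 1 := Real.cos_le_one _
  have hδ : (0:ℝ) ≤ 1 - c := by linarith
  set S : Finset (Fin (n-1)) := Finset.univ.filter (fun j => |θ j| < 1) with hS
  set A : Finset (Fin (n-1)) := Finset.univ.filter (fun j => 1 ≤ |θ j|) with hAdef
  -- cardinality facts
  have hSA : S.card + A.card = n - 1 := by
    have := Finset.card_filter_add_card_filter_not
      (s := (Finset.univ : Finset (Fin (n-1)))) (p := fun j => |θ j| < 1)
    simp only [not_lt] at this
    simpa [hS, hAdef] using this
  have hn1 : (1:ℕ) ≤ n := by omega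
  have hScard : ((n:ℝ) - 1) / 2 ≤ (S.card : ℝ) := by
    have h1 : ((S.card : ℝ)) + (A.card : ℝ) = (n:ℝ) - 1 := by
      have := congrArg (fun k : ℕ => (k : ℝ)) hSA
      push_cast [Nat.cast_sub hn1] at this
      linarith [this]
    linarith [hA]
  -- key per-index bounds
  have hkey : ∀ j : Fin (n-1), |θ j| < 1 → Real.cos (θ j₀ - θ j) ≤ c := by
    intro j hj
    apply cos_key
    · have := abs_sub_abs_le_abs_sub (θ j₀) (θ j)
      linarith
    · have := abs_sub (θ j₀) (θ j)
      linarith [hθ j₀, hθ j]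
  have hkey' : ∀ j : Fin (n-1), |θ j| < 1 → Real.cos (θ j - θ j₀) ≤ c := by
    intro j hj
    have : θ j - θ j₀ = -(θ j₀ - θ j) := by ring
    rw [this, Real.cos_neg]
    exact hkey j hj
  have hj₀S : j₀ ∉ S := by
    simp only [hS, Finset.mem_filter, not_and, not_lt]
    intro _
    nlinarith
  set S₁ := S.filter (fun j => j < j₀) with hS₁
  set S₂ := S.filter (fun j => j₀ < j) with hS₂
  have hcards : S₁.card + S₂.card = S.card := by
    have h := Finset.card_filter_add_card_filter_not
      (s := S) (p := fun j => j < j₀)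
    have h2 : S.filter (fun j => ¬ j < j₀) = S₂ := by
      apply Finset.filter_congr
      intro j hj
      have hne : j ≠ j₀ := by
        rintro rfl; exact hj₀S hj
      simp only [not_lt, eq_iff_iff]
      constructor
      · intro h; exact lt_of_le_of_ne h (Ne.symm hne)
      · exact le_of_lt
    rw [h2] at h
    exact h
  -- the pairwise defect bound
  have hnonneg : ∀ j : Fin (n-1), (0:ℝ) ≤ ∑ k ∈ Finset.Iio j, (1 - Real.cos (θ j - θ k)) := by
    intro j
    apply Finset.sum_nonneg
    intro k _
    linarith [Real.cos_le_one (θ j - θ k)]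
  have hdefect : (1 - c) * (S.card : ℝ) ≤
      ∑ j, ∑ k ∈ Finset.Iio j, (1 - Real.cos (θ j - θ k)) := by
    have hj₀S₂ : j₀ ∉ S₂ := by
      simp [hS₂]
    have hb1 : (1 - c) * (S₁.card : ℝ) ≤ ∑ k ∈ Finset.Iio j₀, (1 - Real.cos (θ j₀ - θ k)) := by
      calc (1 - c) * (S₁.card : ℝ) = ∑ k ∈ S₁, (1 - c) := by
            rw [Finset.sum_const]; ring
        _ ≤ ∑ k ∈ S₁, (1 - Real.cos (θ j₀ - θ k)) := by
            apply Finset.sum_le_sum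
            intro k hk
            have hk' : |θ k| < 1 := by
              simp only [hS₁, hS, Finset.mem_filter] at hk
              exact hk.1.2
            linarith [hkey k hk']
        _ ≤ ∑ k ∈ Finset.Iio j₀, (1 - Real.cos (θ j₀ - θ k)) := by
            apply Finset.sum_le_sum_of_subset_of_nonneg
            · intro k hk
              simp only [hS₁, Finset.mem_filter] at hk
              simpa [Finset.mem_Iio] using hk.2
            · intro k _ _
              linarith [Real.cos_le_one (θ j₀ - θ k)]
    have hb2 : (1 - c) * (S₂.card : ℝ) ≤
        ∑ j ∈ S₂, ∑ k ∈ Finset.Iio j, (1 - Real.cos (θ j - θ k)) := by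
      calc (1 - c) * (S₂.card : ℝ) = ∑ j ∈ S₂, (1 - c) := by
            rw [Finset.sum_const]; ring
        _ ≤ ∑ j ∈ S₂, ∑ k ∈ Finset.Iio j, (1 - Real.cos (θ j - θ k)) := by
            apply Finset.sum_le_sum
            intro j hj
            simp only [hS₂, hS, Finset.mem_filter] at hj
            have hmem : j₀ ∈ Finset.Iio j := by simpa [Finset.mem_Iio] using hj.2
            calc (1 - c) ≤ 1 - Real.cos (θ j - θ j₀) := by linarith [hkey' j hj.1.2]
              _ ≤ ∑ k ∈ Finset.Iio j, (1 - Real.cos (θ j - θ k)) := by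
                  apply Finset.single_le_sum (f := fun k => 1 - Real.cos (θ j - θ k))
                    (fun k _ => sub_nonneg.2 (Real.cos_le_one _)) hmem
    calc (1 - c) * (S.card : ℝ)
        = (1 - c) * (S₁.card : ℝ) + (1 - c) * (S₂.card : ℝ) := by
          rw [← hcards]; push_cast; ring
      _ ≤ (∑ k ∈ Finset.Iio j₀, (1 - Real.cos (θ j₀ - θ k))) +
          ∑ j ∈ S₂, ∑ k ∈ Finset.Iio j, (1 - Real.cos (θ j - θ k)) := by
          linarith
      _ = ∑ j ∈ insert j₀ S₂, ∑ k ∈ Finset.Iio j, (1 - Real.cos (θ j - θ k)) := by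
          rw [Finset.sum_insert hj₀S₂]
      _ ≤ ∑ j, ∑ k ∈ Finset.Iio j, (1 - Real.cos (θ j - θ k)) := by
          apply Finset.sum_le_sum_of_subset_of_nonneg (Finset.subset_univ _)
          intro j _ _
          exact hnonneg j
  -- rewrite the defect sum
  have hsplit : ∑ j, ∑ k ∈ Finset.Iio j, (1 - Real.cos (θ j - θ k)) =
      (∑ j : Fin (n-1), ((Finset.Iio j).card : ℝ)) -
        ∑ j, ∑ k ∈ Finset.Iio j, Real.cos (θ j - θ k) := by
    rw [← Finset.sum_sub_distrib]
    congr 1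
    ext j
    rw [Finset.sum_sub_distrib, Finset.sum_const]
    simp
  -- Gauss sum
  have hT : (∑ j : Fin (n-1), ((Finset.Iio j).card : ℝ)) =
      ((n:ℝ) - 1) * ((n:ℝ) - 2) / 2 := by
    have h1 : (∑ j : Fin (n-1), ((Finset.Iio j).card : ℕ)) = ∑ i ∈ Finset.range (n-1), i := by
      rw [Finset.sum_range fun i => i]
      apply Finset.sum_congr rfl
      intro j _
      simp [Fin.card_Iio]
    have h2 : (∑ i ∈ Finset.range (n-1), i) * 2 = (n-1) * (n-1-1) := Finset.sum_range_id_mul_two _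
    have h2' : n - 1 - 1 = n - 2 := by omega
    rw [h2'] at h2
    have h3 : ((∑ j : Fin (n-1), ((Finset.Iio j).card : ℕ)) : ℝ) * 2 = ((n:ℝ)-1) * ((n:ℝ)-2) := by
      have := congrArg (fun k : ℕ => (k : ℝ)) (h1 ▸ h2)
      push_cast [Nat.cast_sub hn1, Nat.cast_sub hn] at this
      linarith
    push_cast at h3 ⊢
    linarith
  have hcos1 : ∑ j, Real.cos (θ j) ≤ (n:ℝ) - 1 := by
    calc ∑ j, Real.cos (θ j) ≤ ∑ _j : Fin (n-1), (1:ℝ) :=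
          Finset.sum_le_sum (fun j _ => Real.cos_le_one (θ j))
      _ = (n:ℝ) - 1 := by
          rw [Finset.sum_const]
          simp [Nat.cast_sub hn1]
  -- total bound
  have hC : ((n.choose 2 : ℕ) : ℝ) = (n:ℝ) * ((n:ℝ) - 1) / 2 := by
    rw [Nat.cast_choose_two (K := ℝ) n]
  have hn2 : (2:ℝ) ≤ (n:ℝ) := by exact_mod_cast hn
  have hCpos : (0:ℝ) < ((n.choose 2 : ℕ) : ℝ) := by rw [hC]; nlinarith
  have htotal : (∑ j, Real.cos (θ j)) + ∑ j, ∑ k ∈ Finset.Iio j, Real.cos (θ j - θ k) ≤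
      ((n.choose 2 : ℕ) : ℝ) - (1 - c) * (S.card : ℝ) := by
    have h1 : ∑ j, ∑ k ∈ Finset.Iio j, Real.cos (θ j - θ k) ≤
        ((n:ℝ) - 1) * ((n:ℝ) - 2) / 2 - (1 - c) * (S.card : ℝ) := by
      rw [hsplit, hT] at hdefect
      linarith
    rw [hC]
    nlinarith [hcos1]
  -- final arithmetic
  have hnR : (0:ℝ) < (n:ℝ) := by linarith
  rw [one_div, inv_mul_le_iff₀ hCpos]
  have hrhs : ((n.choose 2 : ℕ) : ℝ) * (1 - (1 - c) / n) =
      ((n.choose 2 : ℕ) : ℝ) - (1 - c) * (((n:ℝ) - 1) / 2) := by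
    rw [hC]
    field_simp
  rw [hrhs]
  have : (1 - c) * (((n:ℝ) - 1) / 2) ≤ (1 - c) * (S.card : ℝ) :=
    mul_le_mul_of_nonneg_left hScard hδ
  linarith
end

section
/- Let n ≥ 2 and q ≥ 2, and let θ ∈ ℝ^{n−1} with 1/√q < ‖θ‖_∞ ≤ π/2. Let Γ be the (n−1)×(n−1) matrix with diagonal 1 and off-diagonal −1/(n−1). Then θᵀΓθ ≥ 1/(4q). -/
open Real Matrix

theorem quadratic_form_lower_bound (n q : ℕ) (hn : 2 ≤ n) (hq : 2 ≤ q)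
    (θ : Fin (n - 1) → ℝ)
    (hlow : ∃ i, 1 / Real.sqrt q < |θ i|)
    (hhigh : ∀ i, |θ i| ≤ Real.pi / 2)
    (Γ : Matrix (Fin (n - 1)) (Fin (n - 1)) ℝ)
    (hΓ : Γ = Matrix.of fun i j => if i = j then (1 : ℝ) else -1 / (n - 1)) :
    1 / (4 * q) ≤ θ ⬝ᵥ Γ.mulVec θ := by
  obtain ⟨i, hi⟩ := hlow
  set m : ℝ := (n : ℝ) - 1 with hm
  have hn1 : (2:ℝ) ≤ (n:ℝ) := by exact_mod_cast hn
  have hm1 : (1 : ℝ) ≤ m := by simp [hm]; linarith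
  have hm0 : (0:ℝ) < m := by linarith
  have hcard : ((Finset.univ : Finset (Fin (n-1))).card : ℝ) = m := by
    simp [hm, Nat.cast_sub (by omega : 1 ≤ n)]
  set S : ℝ := ∑ j, θ j with hS
  set T : ℝ := ∑ j, θ j ^ 2 with hT
  have hmv : ∀ k, (Γ.mulVec θ) k = θ k + θ k / m - S / m := by
    intro k
    have : ∀ j, Γ k j * θ j = (if k = j then θ j + θ j / m else 0) + (-1/m) * θ j := by
      intro j
      by_cases h : k = j <;> simp [hΓ, h, hm] <;> ring
    simp only [Matrix.mulVec, dotProduct, this, Finset.sum_add_distrib,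
      Finset.sum_ite_eq, Finset.mem_univ, if_true, ← Finset.mul_sum, ← hS]
    ring
  have hQ : θ ⬝ᵥ Γ.mulVec θ = T + T / m - S ^ 2 / m := by
    simp only [dotProduct, hmv]
    have : ∀ k, θ k * (θ k + θ k / m - S / m) = (θ k ^ 2 + θ k ^ 2 / m) - (S/m) * θ k := by
      intro k; ring
    simp only [this, Finset.sum_sub_distrib, Finset.sum_add_distrib, ← Finset.sum_div,
      ← Finset.mul_sum, ← hS, ← hT]
    ring
  have hCS : S ^ 2 ≤ m * T := by
    have := sq_sum_le_card_mul_sum_sq (s := (Finset.univ : Finset (Fin (n-1)))) (f := θ)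
    rw [hcard] at this
    exact this
  have hexp : ∑ j, (θ j - S/m)^2 = T - S^2/m := by
    have : ∀ j, (θ j - S/m)^2 = θ j ^2 - (2*(S/m))*θ j + (S/m)^2 := by intro j; ring
    simp only [this, Finset.sum_add_distrib, Finset.sum_sub_distrib, ← Finset.mul_sum,
      Finset.sum_const, nsmul_eq_mul, hcard, ← hS, ← hT]
    field_simp
    ring
  have hsum : (θ i - S / m) ^ 2 ≤ T - S ^ 2 / m := by
    rw [← hexp]
    exact Finset.single_le_sum (fun j _ => sq_nonneg (θ j - S/m)) (Finset.mem_univ i)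
  have hq0 : (0:ℝ) < q := by exact_mod_cast Nat.lt_of_lt_of_le (by norm_num) hq
  have hq2 : (1:ℝ) / q ≤ θ i ^ 2 := by
    have hs : (0:ℝ) < Real.sqrt q := Real.sqrt_pos.mpr hq0
    have h1 := mul_self_le_mul_self (by positivity : (0:ℝ) ≤ 1 / Real.sqrt q) hi.le
    rw [← pow_two, ← pow_two, div_pow, one_pow, Real.sq_sqrt hq0.le] at h1
    calc (1:ℝ)/q ≤ |θ i|^2 := h1
    _ = θ i ^ 2 := sq_abs _
  have hb : (S/m)^2 ≤ T/m := by
    rw [div_pow, div_le_div_iff₀ (by positivity) hm0]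
    nlinarith
  have h2 : 1/(q:ℝ) ≤ 2*((θ i - S/m)^2 + (S/m)^2) := by
    nlinarith [sq_nonneg (θ i - 2*(S/m))]
  have h3 : 1/(4*(q:ℝ)) ≤ 1/(2*(q:ℝ)) :=
    one_div_le_one_div_of_le (by positivity) (by linarith)
  have h4 : 1/(2*(q:ℝ)) = (1/(q:ℝ))/2 := by ring
  linarith
end

section
/- Let Φ(θ) = (1/C(n,2))·(∑_{j=1}^{n−1} cos(θ_j) + ∑_{1≤k<j≤n−1} cos(θ_j − θ_k)) and Γ the (n−1)×(n−1) matrix with diagonal 1 and off-diagonal −1/(n−1). Then for all θ ∈ ℝ^{n−1} with ‖θ‖_∞ ≤ π/2, Φ(θ) ≤ 1 − (4/(25n))·θᵀΓθ. -/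
open Real Matrix Finset

theorem charfun_upper_bound_small_theta (n : ℕ) (hn : 2 ≤ n)
    (θ : Fin (n - 1) → ℝ)
    (hθ : ∀ i, |θ i| ≤ Real.pi / 2)
    (Γ : Matrix (Fin (n - 1)) (Fin (n - 1)) ℝ)
    (hΓ : Γ = Matrix.of fun i j => if i = j then (1 : ℝ) else -1 / (n - 1)) :
    (1 / (n.choose 2 : ℝ)) *
        ((∑ j, Real.cos (θ j)) +
          ∑ j, ∑ k ∈ Finset.Iio j, Real.cos (θ j - θ k)) ≤
      1 - (4 / (25 * n)) * (θ ⬝ᵥ Γ.mulVec θ) := by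
  have hpi := Real.pi_pos
  have hpi4 := Real.pi_le_four
  -- quadratic upper bound for cosine
  have hcos : ∀ x : ℝ, |x| ≤ Real.pi → Real.cos x ≤ 1 - 2/25 * x^2 := by
    intro x hx
    have h := Real.cos_le_one_sub_mul_cos_sq hx
    have h2 : 2/25 * x^2 ≤ 2/Real.pi^2 * x^2 := by
      apply mul_le_mul_of_nonneg_right _ (sq_nonneg x)
      rw [div_le_div_iff₀ (by norm_num) (by positivity)]
      nlinarith
    linarith
  -- notation
  set T := ∑ j, θ j with hT
  set Sq := ∑ j, θ j ^ 2 with hSq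
  set D := ∑ j, ∑ k ∈ Finset.Iio j, (θ j - θ k)^2 with hD
  have hmr : ((n:ℝ) - 1) = ((n-1 : ℕ):ℝ) := by
    have := Nat.cast_sub (show 1 ≤ n by omega) (R := ℝ)
    simp at this; linarith
  have hmpos : (0:ℝ) < ((n-1 : ℕ):ℝ) := by
    exact_mod_cast Nat.pos_of_ne_zero (by omega)
  have hnpos : (0:ℝ) < (n:ℝ) := by exact_mod_cast (by omega : 0 < n)
  -- value of the quadratic form
  have hMne : ((n:ℝ) - 1) ≠ 0 := by rw [hmr]; exact ne_of_gt hmpos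
  have hQ : θ ⬝ᵥ Γ.mulVec θ
      = (1 + 1/((n:ℝ)-1)) * Sq - (1/((n:ℝ)-1)) * T^2 := by
    subst hΓ
    have hinner : ∀ i, (Matrix.of fun i j => if i = j then (1 : ℝ) else -1 / ((n:ℝ) - 1)).mulVec θ i
        = (1 + 1/((n:ℝ)-1)) * θ i - (1/((n:ℝ)-1)) * T := by
      intro i
      simp only [Matrix.mulVec, dotProduct, Matrix.of_apply]
      have he : ∀ j, (if i = j then (1:ℝ) else -1/((n:ℝ)-1)) * θ j
          = (-1/((n:ℝ)-1)) * θ j + (if i = j then (1 + 1/((n:ℝ)-1)) * θ j else 0) := by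
        intro j
        by_cases h : i = j
        · simp only [if_pos h]
          field_simp
          ring
        · simp [h]
      rw [Finset.sum_congr rfl fun j _ => he j, Finset.sum_add_distrib, ← Finset.mul_sum,
        Finset.sum_ite_eq]
      simp [← hT]
      ring
    simp only [dotProduct]
    have he2 : ∀ i, θ i * ((Matrix.of fun i j => if i = j then (1 : ℝ) else -1 / ((n:ℝ) - 1)).mulVec θ i)
        = (1 + 1/((n:ℝ)-1)) * θ i^2 - ((1/((n:ℝ)-1)) * T) * θ i := by
      intro i; rw [hinner i]; ring
    rw [Finset.sum_congr rfl fun i _ => he2 i, Finset.sum_sub_distrib,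
      ← Finset.mul_sum, ← Finset.mul_sum, ← hT, ← hSq]
    ring
  -- full double sum
  have hrow : ∀ j, ∑ k, (θ j - θ k)^2 = ((n-1:ℕ):ℝ) * θ j^2 - (2*T) * θ j + Sq := by
    intro j
    have he : ∀ k : Fin (n-1), (θ j - θ k)^2 = θ j^2 - (2 * θ j) * θ k + θ k^2 := fun k => by ring
    rw [Finset.sum_congr rfl fun k _ => he k, Finset.sum_add_distrib, Finset.sum_sub_distrib,
      Finset.sum_const, ← Finset.mul_sum, ← hT, ← hSq, Finset.card_univ, Fintype.card_fin]
    simp [nsmul_eq_mul]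
    ring
  have hF : ∑ j, ∑ k, (θ j - θ k)^2 = 2*((n-1:ℕ):ℝ)*Sq - 2*T^2 := by
    rw [Finset.sum_congr rfl fun j _ => hrow j, Finset.sum_add_distrib, Finset.sum_sub_distrib,
      Finset.sum_const, ← Finset.mul_sum, ← Finset.mul_sum, ← hT, ← hSq,
      Finset.card_univ, Fintype.card_fin]
    simp [nsmul_eq_mul]
    ring
  -- the lower-triangular sum is half of the full sum
  have h2D : ∑ j, ∑ k, (θ j - θ k)^2 = 2 * D := by
    have key : ∀ j k : Fin (n-1), (θ j - θ k)^2
        = (if k < j then (θ j - θ k)^2 else 0) + ((if j < k then (θ j - θ k)^2 else 0)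
          + (if j = k then (θ j - θ k)^2 else 0)) := by
      intro j k
      rcases lt_trichotomy j k with h|h|h
      · simp [h, h.ne, h.not_gt]
      · subst h; simp
      · simp [h, h.ne', h.not_gt]
    have hsplit : ∑ j, ∑ k, (θ j - θ k)^2
        = (∑ j, ∑ k, if k < j then (θ j - θ k)^2 else 0)
          + ((∑ j, ∑ k, if j < k then (θ j - θ k)^2 else 0)
          + (∑ j, ∑ k, if j = k then (θ j - θ k)^2 else 0)) := by
      simp only [← Finset.sum_add_distrib]
      exact Finset.sum_congr rfl fun j _ => Finset.sum_congr rfl fun k _ => key j k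
    have hsw : (∑ j, ∑ k, if j < k then (θ j - θ k)^2 else 0)
        = ∑ j, ∑ k, if k < j then (θ j - θ k)^2 else 0 := by
      rw [Finset.sum_comm]
      refine Finset.sum_congr rfl fun j _ => Finset.sum_congr rfl fun k _ => ?_
      by_cases h : k < j
      · simp only [if_pos h]; ring
      · simp [h]
    have hdiag : (∑ j : Fin (n-1), ∑ k, if j = k then (θ j - θ k)^2 else 0) = 0 := by
      simp [Finset.sum_ite_eq]
    have hIi : ∀ j : Fin (n-1), ∑ k ∈ Finset.Iio j, (θ j - θ k)^2
        = ∑ k, if k < j then (θ j - θ k)^2 else 0 := by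
      intro j
      have : Finset.Iio j = Finset.univ.filter (fun k => k < j) := by ext k; simp
      rw [this, Finset.sum_filter]
    have hDS : D = ∑ j, ∑ k, if k < j then (θ j - θ k)^2 else 0 :=
      Finset.sum_congr rfl fun j _ => hIi j
    rw [hsplit, hsw, hdiag, ← hDS]
    ring
  -- key identity : Sq + D = (n-1) * quadratic form
  have hSD : Sq + D = ((n-1:ℕ):ℝ) * (θ ⬝ᵥ Γ.mulVec θ) := by
    have hD' : D = ((n-1:ℕ):ℝ) * Sq - T^2 := by linarith [h2D, hF]
    rw [hD', hQ, ← hmr]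
    have hMM : ((n:ℝ)-1) * (1/((n:ℝ)-1)) = 1 := by field_simp
    linear_combination (T^2 - Sq) * hMM
  -- counting
  have hCnat : 2 * n.choose 2 = n * (n - 1) := by
    have h1 : (n - 1) * (n - 1 + 1) = n * (n - 1) := by
      have h : n - 1 + 1 = n := by omega
      rw [h, Nat.mul_comm]
    have h2 : 2 ∣ n * (n - 1) := by
      rw [← h1]; exact (Nat.even_mul_succ_self (n-1)).two_dvd
    rw [Nat.choose_two_right]
    exact Nat.mul_div_cancel' h2
  have hC2 : 2 * (n.choose 2 : ℝ) = (n:ℝ) * ((n-1:ℕ):ℝ) := by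
    exact_mod_cast congrArg (Nat.cast (R := ℝ)) hCnat
  have hCpos : (0:ℝ) < (n.choose 2 : ℝ) := by
    exact_mod_cast Nat.choose_pos hn
  have hPnat : (n - 1) + ∑ j : Fin (n-1), (Finset.Iio j).card = n.choose 2 := by
    simp only [Fin.card_Iio]
    rw [Fin.sum_univ_eq_sum_range (fun i => i)]
    obtain ⟨k, rfl⟩ : ∃ k, n = k + 2 := ⟨n - 2, by omega⟩
    have hs : (∑ i ∈ Finset.range (k+2-1), i) * 2 = (k+1) * k := by
      simpa using Finset.sum_range_id_mul_two (k+1)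
    have hc := hCnat
    have hp1 : (k+1) * k = k*k + k := by ring
    have hp2 : (k+2) * ((k+2) - 1) = k*k + 3*k + 2 := by
      have : (k+2) - 1 = k + 1 := rfl
      rw [this]; ring
    omega
  have hMP : ((n-1:ℕ):ℝ) + ∑ j : Fin (n-1), ((Finset.Iio j).card : ℝ) = (n.choose 2 : ℝ) := by
    exact_mod_cast congrArg (Nat.cast (R := ℝ)) hPnat
  -- sum inequalities
  have hA : (∑ j, Real.cos (θ j)) ≤ ((n-1:ℕ):ℝ) - 2/25 * Sq := by
    have h1 : (∑ j, Real.cos (θ j)) ≤ ∑ j, (1 - 2/25 * θ j^2) :=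
      Finset.sum_le_sum fun j _ => hcos _ ((hθ j).trans (by linarith))
    have h2 : (∑ j : Fin (n-1), (1 - 2/25 * θ j^2)) = ((n-1:ℕ):ℝ) - 2/25 * Sq := by
      rw [Finset.sum_sub_distrib, Finset.sum_const, ← Finset.mul_sum, ← hSq,
        Finset.card_univ, Fintype.card_fin]
      simp [nsmul_eq_mul]
    linarith
  have hB : (∑ j, ∑ k ∈ Finset.Iio j, Real.cos (θ j - θ k))
      ≤ (∑ j : Fin (n-1), ((Finset.Iio j).card : ℝ)) - 2/25 * D := by
    have h1 : ∀ j : Fin (n-1), ∑ k ∈ Finset.Iio j, Real.cos (θ j - θ k)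
        ≤ ((Finset.Iio j).card : ℝ) - 2/25 * ∑ k ∈ Finset.Iio j, (θ j - θ k)^2 := by
      intro j
      have hb : ∀ k, |θ j - θ k| ≤ Real.pi := by
        intro k
        calc |θ j - θ k| ≤ |θ j| + |θ k| := abs_sub _ _
          _ ≤ Real.pi := by linarith [hθ j, hθ k]
      calc ∑ k ∈ Finset.Iio j, Real.cos (θ j - θ k)
          ≤ ∑ k ∈ Finset.Iio j, (1 - 2/25 * (θ j - θ k)^2) :=
            Finset.sum_le_sum fun k _ => hcos _ (hb k)
        _ = ((Finset.Iio j).card : ℝ) - 2/25 * ∑ k ∈ Finset.Iio j, (θ j - θ k)^2 := by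
            rw [Finset.sum_sub_distrib, Finset.sum_const, ← Finset.mul_sum]
            simp [nsmul_eq_mul]
    have h2 := Finset.sum_le_sum fun j (_ : j ∈ Finset.univ) => h1 j
    rw [Finset.sum_sub_distrib, ← Finset.mul_sum, ← hD] at h2
    exact h2
  -- put everything together
  set Q := θ ⬝ᵥ Γ.mulVec θ with hQdef
  have hstep : (1 / (n.choose 2 : ℝ)) *
        ((∑ j, Real.cos (θ j)) + ∑ j, ∑ k ∈ Finset.Iio j, Real.cos (θ j - θ k))
      ≤ (1 / (n.choose 2 : ℝ)) * ((n.choose 2 : ℝ) - 2/25 * (((n-1:ℕ):ℝ) * Q)) := by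
    apply mul_le_mul_of_nonneg_left _ (by positivity)
    have := hSD
    linarith
  have heq : (1 / (n.choose 2 : ℝ)) * ((n.choose 2 : ℝ) - 2/25 * (((n-1:ℕ):ℝ) * Q))
      = 1 - (4 / (25 * n)) * Q := by
    have hCne : (n.choose 2 : ℝ) ≠ 0 := ne_of_gt hCpos
    have h1 : (1 / (n.choose 2 : ℝ)) * ((n.choose 2 : ℝ) - 2/25 * (((n-1:ℕ):ℝ) * Q))
        = 1 - (2 * ((n-1:ℕ):ℝ) / (25 * (n.choose 2 : ℝ))) * Q := by
      field_simp
    have h2 : 2 * ((n-1:ℕ):ℝ) / (25 * (n.choose 2 : ℝ)) = 4 / (25 * (n:ℝ)) := by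
      rw [div_eq_div_iff (by positivity) (by positivity)]
      linear_combination (-50 : ℝ) * hC2
    rw [h1, h2]
  linarith [hstep, heq.le, heq.ge]
end

section
/- Let n ≥ 3 and index ℝ^{(n−1)²} by pairs (i,j), 1 ≤ i,j ≤ n−1. Define Γ by Γ_{(i,j),(i',j')} = 1 if (i,j)=(i',j'), −1/(n−1) if exactly one of i=i' or j=j' holds, and 1/(n−1)² if i≠i' and j≠j'. Define Ψ by Ψ_{(i,j),(i',j')} = 4(n−1)²/n² if (i,j)=(i',j'), 2(n−1)²/n² if exactly one of i=i' or j=j' holds, and (n−1)²/n² otherwise. Then ΓΨ = I, i.e., Ψ = Γ^{-1}. -/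
open Matrix Kronecker

lemma bc_aux (m : ℕ) (hm : 2 ≤ m) :
    (Matrix.of fun i k : Fin m => if i = k then (1:ℝ) else -1/m) *
      (Matrix.of fun i k : Fin m => if i = k then 2*m/((m:ℝ)+1) else m/((m:ℝ)+1)) = 1 := by
  have hm0 : (m:ℝ) ≠ 0 := by
    have : (0:ℝ) < m := by exact_mod_cast (by omega : 0 < m)
    linarith
  have hm1 : (m:ℝ) + 1 ≠ 0 := by positivity
  ext i j
  rw [Matrix.mul_apply, Matrix.one_apply]
  have hsummand : ∀ k : Fin m,
      (Matrix.of fun i k : Fin m => if i = k then (1:ℝ) else -1/m) i k *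
      (Matrix.of fun i k : Fin m => if i = k then 2*m/((m:ℝ)+1) else m/((m:ℝ)+1)) k j
      = (-1/((m:ℝ)+1)) + (if k = j then (-1/((m:ℝ)+1)) else 0)
        + (if i = k then (1:ℝ) else 0)
        + (if k = j then (if i = j then (1:ℝ) else 0) else 0) := by
    intro k
    simp only [Matrix.of_apply]
    by_cases h1 : i = k <;> by_cases h2 : k = j
    · subst h1; subst h2
      simp only [if_pos rfl, ↓reduceIte]
      field_simp
      ring
    · subst h1
      simp only [if_pos rfl, if_neg h2, ↓reduceIte]
      field_simp
      ring
    · have hij : i ≠ j := fun h => h1 (h.trans h2.symm)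
      simp only [if_neg h1, if_pos h2, if_neg hij]
      field_simp
      ring
    · simp only [if_neg h1, if_neg h2]
      field_simp
      ring
  rw [Finset.sum_congr rfl (fun k _ => hsummand k)]
  simp only [Finset.sum_add_distrib, Finset.sum_const, Finset.card_univ, Fintype.card_fin,
    nsmul_eq_mul, Finset.sum_ite_eq, Finset.sum_ite_eq', Finset.mem_univ, if_true]
  split_ifs with h
  · field_simp; ring
  · field_simp; ring

theorem nxn_gamma_inverse (n : ℕ) (hn : 3 ≤ n)
    (Γ Ψ : Matrix (Fin (n - 1) × Fin (n - 1)) (Fin (n - 1) × Fin (n - 1)) ℝ)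
    (hΓ : Γ = Matrix.of fun p p' =>
      if p = p' then (1 : ℝ)
      else if (p.1 = p'.1 ∧ p.2 ≠ p'.2) ∨ (p.1 ≠ p'.1 ∧ p.2 = p'.2) then
        -1 / (n - 1)
      else 1 / ((n : ℝ) - 1) ^ 2)
    (hΨ : Ψ = Matrix.of fun p p' =>
      if p = p' then 4 * ((n : ℝ) - 1) ^ 2 / n ^ 2
      else if (p.1 = p'.1 ∧ p.2 ≠ p'.2) ∨ (p.1 ≠ p'.1 ∧ p.2 = p'.2) then
        2 * ((n : ℝ) - 1) ^ 2 / n ^ 2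
      else ((n : ℝ) - 1) ^ 2 / n ^ 2) :
    Γ * Ψ = 1 := by
  have hc : ((n - 1 : ℕ) : ℝ) = (n:ℝ) - 1 := by
    rw [Nat.cast_sub (by omega : 1 ≤ n)]; simp
  have hn0 : (n:ℝ) ≠ 0 := by
    have : (0:ℝ) < n := by exact_mod_cast (by omega : 0 < n)
    linarith
  have hm0 : (n:ℝ) - 1 ≠ 0 := by
    have : (2:ℝ) ≤ (n:ℝ) - 1 := by
      have : (3:ℝ) ≤ n := by exact_mod_cast hn
      linarith
    linarith
  have hm1 : (n:ℝ) - 1 + 1 ≠ 0 := by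
    intro h; apply hn0; linarith
  have key := bc_aux (n - 1) (by omega)
  rw [hc] at key
  set B : Matrix (Fin (n-1)) (Fin (n-1)) ℝ :=
    Matrix.of fun i k : Fin (n-1) => if i = k then (1:ℝ) else -1/((n:ℝ)-1) with hB
  set C : Matrix (Fin (n-1)) (Fin (n-1)) ℝ :=
    Matrix.of fun i k : Fin (n-1) =>
      if i = k then 2*((n:ℝ)-1)/((n:ℝ)-1+1) else ((n:ℝ)-1)/((n:ℝ)-1+1) with hC
  have hΓ' : Γ = B ⊗ₖ B := by
    rw [hΓ]
    ext ⟨p1, p2⟩ ⟨q1, q2⟩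
    simp only [of_apply, kroneckerMap_apply, hB, Prod.mk.injEq, ne_eq]
    rcases eq_or_ne p1 q1 with he1 | he1 <;> rcases eq_or_ne p2 q2 with he2 | he2 <;>
        simp [he1, he2] <;> field_simp <;> ring
  have hΨ' : Ψ = C ⊗ₖ C := by
    rw [hΨ]
    ext ⟨p1, p2⟩ ⟨q1, q2⟩
    simp only [of_apply, kroneckerMap_apply, hC, Prod.mk.injEq, ne_eq]
    rcases eq_or_ne p1 q1 with he1 | he1 <;> rcases eq_or_ne p2 q2 with he2 | he2 <;>
        simp [he1, he2] <;> field_simp <;> ring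
  rw [hΓ', hΨ', ← Matrix.mul_kronecker_mul, key, Matrix.one_kronecker_one]
end

section
/- Fix ℓ, k ≥ 1 with ℓk ≥ 2 and index ℝ^{ℓk} by pairs (i,j) with 1 ≤ i ≤ ℓ, 1 ≤ j ≤ k. Let A be the ℓk × ℓk matrix with A_{(i,j),(i',j')} = 4 if (i,j)=(i',j'), 2 if exactly one of i=i' or j=j' holds, and 1 otherwise. Partition A so that A₂₂ = 4 is the entry at index (ℓ,k) and A₁₁ is the principal submatrix on all other indices. Then the Schur complement A₂₂ − A₂₁A₁₁^{-1}A₁₂ equals 1 + (ℓ + k + 1)/(ℓk). -/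
open Matrix

/-- Sum over a type of a function that is constant except at one point. -/
lemma sum_ite_const_aux {α : Type*} [Fintype α] [DecidableEq α] (c : α) (a b : ℝ) :
    ∑ x : α, (if x = c then a else b) = a + ((Fintype.card α : ℝ) - 1) * b := by
  have h : ∀ x : α, (if x = c then a else b) = (if x = c then a - b else 0) + b := by
    intro x; split <;> ring
  simp_rw [h, Finset.sum_add_distrib, Finset.sum_ite_eq' Finset.univ c, Finset.sum_const]
  simp only [Finset.mem_univ, if_true, Finset.card_univ, nsmul_eq_mul]
  ring

/-- Sum over the subtype `x ≠ p` of a function vanishing at `p`. -/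
lemma sum_subtype_ne_aux {α : Type*} [Fintype α] [DecidableEq α] (p : α) (g : α → ℝ)
    (hg : g p = 0) : ∑ z : {x : α // x ≠ p}, g z.1 = ∑ q, g q := by
  rw [← Finset.sum_subtype (Finset.univ.erase p)
      (fun x => by simp [Finset.mem_erase]) g]
  exact Finset.sum_erase _ hg

/-- The auxiliary vector `v` (extended by `0` at position `p`). -/
noncomputable def wAux (ℓ k : ℕ) (p : Fin ℓ × Fin k) : Fin ℓ × Fin k → ℝ :=
  fun q => if q = p then 0 else if q.1 = p.1 then (k:ℝ)⁻¹
    else if q.2 = p.2 then (ℓ:ℝ)⁻¹ else -(((ℓ:ℝ)) * (k:ℝ))⁻¹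

theorem nxn_schur_complement (ℓ k : ℕ) (hℓ : 1 ≤ ℓ) (hk : 1 ≤ k)
    (hℓk : 2 ≤ ℓ * k)
    (A : Matrix (Fin ℓ × Fin k) (Fin ℓ × Fin k) ℝ)
    (hA : A = Matrix.of fun p p' =>
      if p = p' then (4 : ℝ)
      else if (p.1 = p'.1 ∧ p.2 ≠ p'.2) ∨ (p.1 ≠ p'.1 ∧ p.2 = p'.2) then 2
      else 1)
    (p : Fin ℓ × Fin k)
    (hp : p = (⟨ℓ - 1, by omega⟩, ⟨k - 1, by omega⟩))
    (A₁₁ : Matrix {x : Fin ℓ × Fin k // x ≠ p} {x : Fin ℓ × Fin k // x ≠ p} ℝ)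
    (hA₁₁ : A₁₁ = Matrix.of fun i j => A i.1 j.1)
    (A₁₂ : {x : Fin ℓ × Fin k // x ≠ p} → ℝ) (hA₁₂ : A₁₂ = fun i => A i.1 p)
    (A₂₁ : {x : Fin ℓ × Fin k // x ≠ p} → ℝ) (hA₂₁ : A₂₁ = fun j => A p j.1) :
    IsUnit A₁₁.det ∧
      A p p - A₂₁ ⬝ᵥ A₁₁⁻¹.mulVec A₁₂ = 1 + ((ℓ : ℝ) + k + 1) / (ℓ * k) := by
  have hL0 : (0:ℝ) < (ℓ:ℝ) := by exact_mod_cast hℓ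
  have hK0 : (0:ℝ) < (k:ℝ) := by exact_mod_cast hk
  have hLne : (ℓ:ℝ) ≠ 0 := ne_of_gt hL0
  have hKne : (k:ℝ) ≠ 0 := ne_of_gt hK0
  -- decomposition of the entries of A
  have hAdec : ∀ q q' : Fin ℓ × Fin k, A q q' =
      1 + (if q.1 = q'.1 then (1:ℝ) else 0) + (if q.2 = q'.2 then (1:ℝ) else 0)
        + (if q = q' then (1:ℝ) else 0) := by
    intro q q'
    rw [hA]
    simp only [Matrix.of_apply]
    by_cases h1 : q.1 = q'.1 <;> by_cases h2 : q.2 = q'.2 <;>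
      simp [Prod.ext_iff, h1, h2] <;> norm_num
  -- expansion of mulVec
  have hmul : ∀ (y : Fin ℓ × Fin k → ℝ) (q : Fin ℓ × Fin k),
      A.mulVec y q = (∑ r, y r) + (∑ j, y (q.1, j)) + (∑ i, y (i, q.2)) + y q := by
    intro y q
    have e1 : (∑ r : Fin ℓ × Fin k, if q.1 = r.1 then y r else 0) = ∑ j, y (q.1, j) := by
      rw [Fintype.sum_prod_type]
      dsimp only
      rw [Finset.sum_eq_single q.1 (fun b _ hb => Finset.sum_eq_zero fun j _ => if_neg (Ne.symm hb)) (by simp)]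
      exact Finset.sum_congr rfl fun j _ => if_pos rfl
    have e2 : (∑ r : Fin ℓ × Fin k, if q.2 = r.2 then y r else 0) = ∑ i, y (i, q.2) := by
      rw [Fintype.sum_prod_type]
      dsimp only
      simp_rw [Finset.sum_ite_eq, Finset.mem_univ, if_true]
    have e3 : (∑ r : Fin ℓ × Fin k, if q = r then y r else 0) = y q := by
      rw [Finset.sum_ite_eq, if_pos (Finset.mem_univ q)]
    simp only [Matrix.mulVec, dotProduct]
    simp_rw [hAdec, add_mul, one_mul, ite_mul, one_mul, zero_mul,
      Finset.sum_add_distrib]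
    rw [e1, e2, e3]
  set w : Fin ℓ × Fin k → ℝ := wAux ℓ k p with hwdef
  have hw0 : w p = 0 := if_pos rfl
  -- row sums of w
  have hrow : ∀ i, (∑ j, w (i, j)) =
      if i = p.1 then ((k:ℝ)-1) * (k:ℝ)⁻¹
      else (ℓ:ℝ)⁻¹ + ((k:ℝ)-1) * (-(((ℓ:ℝ)) * (k:ℝ))⁻¹) := by
    intro i
    by_cases hi : i = p.1
    · rw [if_pos hi]
      have hv : ∀ j, w (i, j) = if j = p.2 then 0 else (k:ℝ)⁻¹ := by
        intro j
        by_cases hj : j = p.2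
        · rw [if_pos hj]
          have : (i, j) = p := Prod.ext hi hj
          rw [hwdef]; unfold wAux; rw [if_pos this]
        · rw [if_neg hj]
          have hne : (i, j) ≠ p := fun h => hj (congrArg Prod.snd h)
          rw [hwdef]; unfold wAux; rw [if_neg hne, if_pos hi]
      simp_rw [hv]
      rw [sum_ite_const_aux p.2 0 ((k:ℝ)⁻¹), Fintype.card_fin]
      ring
    · rw [if_neg hi]
      have hv : ∀ j, w (i, j) = if j = p.2 then (ℓ:ℝ)⁻¹ else -(((ℓ:ℝ)) * (k:ℝ))⁻¹ := by
        intro j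
        have hne : (i, j) ≠ p := fun h => hi (congrArg Prod.fst h)
        rw [hwdef]; unfold wAux; rw [if_neg hne, if_neg hi]
      simp_rw [hv]
      rw [sum_ite_const_aux p.2 ((ℓ:ℝ)⁻¹) _, Fintype.card_fin]
  -- column sums of w
  have hcol : ∀ j, (∑ i, w (i, j)) =
      if j = p.2 then ((ℓ:ℝ)-1) * (ℓ:ℝ)⁻¹
      else (k:ℝ)⁻¹ + ((ℓ:ℝ)-1) * (-(((ℓ:ℝ)) * (k:ℝ))⁻¹) := by
    intro j
    by_cases hj : j = p.2
    · rw [if_pos hj]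
      have hv : ∀ i, w (i, j) = if i = p.1 then 0 else (ℓ:ℝ)⁻¹ := by
        intro i
        by_cases hi : i = p.1
        · rw [if_pos hi]
          have : (i, j) = p := Prod.ext hi hj
          rw [hwdef]; unfold wAux; rw [if_pos this]
        · rw [if_neg hi]
          have hne : (i, j) ≠ p := fun h => hi (congrArg Prod.fst h)
          rw [hwdef]; unfold wAux; rw [if_neg hne, if_neg hi, if_pos hj]
      simp_rw [hv]
      rw [sum_ite_const_aux p.1 0 ((ℓ:ℝ)⁻¹), Fintype.card_fin]
      ring
    · rw [if_neg hj]
      have hv : ∀ i, w (i, j) = if i = p.1 then (k:ℝ)⁻¹ else -(((ℓ:ℝ)) * (k:ℝ))⁻¹ := by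
        intro i
        have hne : (i, j) ≠ p := fun h => hj (congrArg Prod.snd h)
        by_cases hi : i = p.1
        · rw [if_pos hi, hwdef]; unfold wAux; rw [if_neg hne, if_pos hi]
        · rw [if_neg hi, hwdef]; unfold wAux; rw [if_neg hne, if_neg hi, if_neg hj]
      simp_rw [hv]
      rw [sum_ite_const_aux p.1 ((k:ℝ)⁻¹) _, Fintype.card_fin]
  -- total sum of w
  have htot : (∑ r, w r) =
      ((k:ℝ)-1) * (k:ℝ)⁻¹
        + ((ℓ:ℝ)-1) * ((ℓ:ℝ)⁻¹ + ((k:ℝ)-1) * (-(((ℓ:ℝ)) * (k:ℝ))⁻¹)) := by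
    rw [Fintype.sum_prod_type]
    simp_rw [hrow]
    rw [sum_ite_const_aux p.1 _ _, Fintype.card_fin]
  -- the key computation : A *ᵥ w
  have hAw : ∀ q, A.mulVec w q =
      if q = p then 3 - ((ℓ:ℝ) + k + 1) / ((ℓ:ℝ) * k) else A q p := by
    intro q
    rw [hmul, htot, hrow, hcol]
    by_cases hq : q = p
    · rw [if_pos hq, hq, if_pos rfl, if_pos rfl, hw0]
      field_simp
      ring
    · rw [if_neg hq, hAdec q p, if_neg hq]
      by_cases h1 : q.1 = p.1 <;> by_cases h2 : q.2 = p.2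
      · exact absurd (Prod.ext h1 h2) hq
      · rw [if_pos h1, if_neg h2, if_pos h1, if_neg h2]
        have : w q = (k:ℝ)⁻¹ := by rw [hwdef]; unfold wAux; rw [if_neg hq, if_pos h1]
        rw [this]
        field_simp
        ring
      · rw [if_neg h1, if_pos h2, if_neg h1, if_pos h2]
        have : w q = (ℓ:ℝ)⁻¹ := by
          rw [hwdef]; unfold wAux; rw [if_neg hq, if_neg h1, if_pos h2]
        rw [this]
        field_simp
        ring
      · rw [if_neg h1, if_neg h2, if_neg h1, if_neg h2]
        have : w q = -(((ℓ:ℝ)) * (k:ℝ))⁻¹ := by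
          rw [hwdef]; unfold wAux; rw [if_neg hq, if_neg h1, if_neg h2]
        rw [this]
        field_simp
        ring
  -- positivity of the quadratic form
  have hquad : ∀ y : Fin ℓ × Fin k → ℝ, y ⬝ᵥ A.mulVec y =
      (∑ r, y r)^2 + (∑ i, (∑ j, y (i, j))^2) + (∑ j, (∑ i, y (i, j))^2)
        + ∑ q, (y q)^2 := by
    intro y
    simp only [dotProduct]
    simp_rw [hmul, mul_add, Finset.sum_add_distrib]
    congr 1
    · congr 1
      · congr 1
        · rw [← Finset.sum_mul, sq]
        · rw [Fintype.sum_prod_type]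
          refine Finset.sum_congr rfl fun i _ => ?_
          dsimp only
          rw [← Finset.sum_mul, sq]
      · rw [Fintype.sum_prod_type, Finset.sum_comm]
        refine Finset.sum_congr rfl fun j _ => ?_
        dsimp only
        rw [← Finset.sum_mul, sq]
    · refine Finset.sum_congr rfl fun q _ => ?_
      rw [sq]
  have hposdef : ∀ y : Fin ℓ × Fin k → ℝ, y ≠ 0 → 0 < y ⬝ᵥ A.mulVec y := by
    intro y hy
    obtain ⟨q0, hq0⟩ := Function.ne_iff.mp hy
    have h4 : 0 < ∑ q, (y q)^2 := by
      refine Finset.sum_pos' (fun q _ => sq_nonneg _) ⟨q0, Finset.mem_univ _, ?_⟩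
      rw [sq]
      exact mul_self_pos.mpr hq0
    have n1 : 0 ≤ (∑ r, y r)^2 := sq_nonneg _
    have n2 : 0 ≤ ∑ i, (∑ j, y (i, j))^2 := Finset.sum_nonneg fun _ _ => sq_nonneg _
    have n3 : 0 ≤ ∑ j, (∑ i, y (i, j))^2 := Finset.sum_nonneg fun _ _ => sq_nonneg _
    rw [hquad y]
    linarith
  -- A₁₁ has nonzero determinant
  have hdet : A₁₁.det ≠ 0 := by
    intro h
    obtain ⟨x, hx0, hx⟩ := Matrix.exists_mulVec_eq_zero_iff.mpr h
    set y : Fin ℓ × Fin k → ℝ := fun q => if hq : q = p then 0 else x ⟨q, hq⟩ with hydef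
    have hyp : y p = 0 := dif_pos rfl
    have hyz : ∀ z : {x : Fin ℓ × Fin k // x ≠ p}, y z.1 = x z := by
      intro z
      rw [hydef]
      simp only
      rw [dif_neg z.2]
    have hy0 : y ≠ 0 := by
      obtain ⟨z, hz⟩ := Function.ne_iff.mp hx0
      intro h0
      apply hz
      rw [← hyz z, h0]
      rfl
    have heq : x ⬝ᵥ A₁₁.mulVec x = y ⬝ᵥ A.mulVec y := by
      simp only [dotProduct, Matrix.mulVec]
      have inner : ∀ z : {x : Fin ℓ × Fin k // x ≠ p},
          (∑ z' : {x : Fin ℓ × Fin k // x ≠ p}, A₁₁ z z' * x z')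
            = ∑ q', A z.1 q' * y q' := by
        intro z
        rw [← sum_subtype_ne_aux p (fun q' => A z.1 q' * y q') (by show A z.1 p * y p = 0; rw [hyp, mul_zero])]
        refine Finset.sum_congr rfl fun z' _ => ?_
        rw [hA₁₁, Matrix.of_apply, hyz z']
      calc (∑ z, x z * ∑ z', A₁₁ z z' * x z')
          = ∑ z : {x : Fin ℓ × Fin k // x ≠ p},
              (fun q => y q * ∑ q', A q q' * y q') z.1 := by
            refine Finset.sum_congr rfl fun z _ => ?_
            simp only
            rw [inner z, hyz z]
        _ = ∑ q, y q * ∑ q', A q q' * y q' :=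
            sum_subtype_ne_aux p (fun q => y q * ∑ q', A q q' * y q')
              (by show y p * _ = 0; rw [hyp, zero_mul])
    have := hposdef y hy0
    rw [← heq, hx, dotProduct_zero] at this
    exact lt_irrefl 0 this
  have hunit : IsUnit A₁₁.det := isUnit_iff_ne_zero.mpr hdet
  refine ⟨hunit, ?_⟩
  -- A₁₁ * v = A₁₂
  have hv : A₁₁.mulVec (fun z => w z.1) = A₁₂ := by
    funext z
    rw [hA₁₂]
    simp only [Matrix.mulVec, dotProduct]
    have : (∑ z' : {x : Fin ℓ × Fin k // x ≠ p}, A₁₁ z z' * w z'.1)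
        = ∑ q', A z.1 q' * w q' := by
      rw [← sum_subtype_ne_aux p (fun q' => A z.1 q' * w q')
        (by show A z.1 p * w p = 0; rw [hw0, mul_zero])]
      refine Finset.sum_congr rfl fun z' _ => ?_
      rw [hA₁₁, Matrix.of_apply]
    rw [this]
    have h2 := hAw z.1
    rw [if_neg z.2] at h2
    simpa [Matrix.mulVec, dotProduct] using h2
  have hinv : A₁₁⁻¹.mulVec A₁₂ = fun z => w z.1 := by
    rw [← hv, Matrix.mulVec_mulVec, Matrix.nonsing_inv_mul _ hunit, Matrix.one_mulVec]
  rw [hinv]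
  have hApp : A p p = 4 := by rw [hA]; simp
  have hdot : A₂₁ ⬝ᵥ (fun z => w z.1) = 3 - ((ℓ:ℝ) + k + 1) / ((ℓ:ℝ) * k) := by
    have : A₂₁ ⬝ᵥ (fun z => w z.1) = ∑ q, A p q * w q := by
      rw [hA₂₁]
      simp only [dotProduct]
      exact sum_subtype_ne_aux p (fun q => A p q * w q)
        (by show A p p * w p = 0; rw [hw0, mul_zero])
    rw [this]
    have h2 := hAw p
    rw [if_pos rfl] at h2
    simpa [Matrix.mulVec, dotProduct] using h2
  rw [hdot, hApp]

  ring
end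

section
/- Let n ≥ 3 and let Γ be the (n−1)²×(n−1)² matrix indexed by pairs (i,j) ∈ {1,…,n−1}² with Γ_{(i,j),(i',j')} = 1 if (i,j)=(i',j'), −1/(n−1) if exactly one of i=i' or j=j' holds, and 1/(n−1)² otherwise. Then Γ has: eigenvalue 1/(n−1)² with eigenvector the all-ones vector; eigenvalue n/(n−1)² on the span of the vectors δ_{i·} and δ_{·j} (2 ≤ i,j ≤ n−1); and eigenvalue (1 + 1/(n−1))² on the span of the vectors δ_{ij} (2 ≤ i,j ≤ n−1), where δ_{i·}(ℓ,k) = −1 if ℓ=1, 1 if ℓ=i, 0 otherwise; δ_{·j}(ℓ,k) = −1 if k=1, 1 if k=j, 0 otherwise; and δ_{ij}(ℓ,k) = −1 if (ℓ,k) ∈ {(1,1),(i,j)}, 1 if (ℓ,k) ∈ {(1,j),(i,1)}, 0 otherwise. -/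
open Matrix

private lemma rowsum_aux (m : ℕ) (c : ℝ) (f : Fin m → ℝ) (y : Fin m) :
    ∑ x, (if y = x then (1:ℝ) else c) * f x = (1 - c) * f y + c * ∑ x, f x := by
  have h : ∀ x : Fin m, (if y = x then (1:ℝ) else c) * f x
      = (if y = x then (1 - c) * f x else 0) + c * f x := by
    intro x; split <;> ring
  rw [Finset.sum_congr rfl (fun x _ => h x), Finset.sum_add_distrib,
    Finset.sum_ite_eq, ← Finset.mul_sum]
  simp

private lemma sum_delta_aux (m : ℕ) (i z : Fin m) (h : i ≠ z) (a b : ℝ) :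
    ∑ x, (if x = z then a else if x = i then b else 0) = a + b := by
  have h1 : ∀ x : Fin m, (if x = z then a else if x = i then b else 0)
      = (if x = z then a else 0) + (if x = i then b else 0) := by
    intro x
    rcases eq_or_ne x z with rfl | h1
    · simp [h.symm]
    · simp [h1]
  rw [Finset.sum_congr rfl (fun x _ => h1 x), Finset.sum_add_distrib]
  simp

private lemma tensor_eq_aux (m : ℕ) (z i j : Fin m) (hi : i ≠ z) (hj : j ≠ z) :
    (fun p : Fin m × Fin m =>
      if p = (z, z) ∨ p = (i, j) then (-1:ℝ)
      else if p = (z, j) ∨ p = (i, z) then 1 else 0)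
    = (fun q : Fin m × Fin m =>
      (fun x => if x = z then (1:ℝ) else if x = i then -1 else 0) q.1
      * (fun y => if y = z then (-1:ℝ) else if y = j then 1 else 0) q.2) := by
  funext q
  obtain ⟨a, b⟩ := q
  rcases eq_or_ne a z with h1 | h1 <;> rcases eq_or_ne a i with h2 | h2 <;>
    rcases eq_or_ne b z with h3 | h3 <;> rcases eq_or_ne b j with h4 | h4 <;>
    simp_all [Prod.ext_iff]

theorem nxn_gamma_eigenvectors (n : ℕ) (hn : 3 ≤ n)
    (Γ : Matrix (Fin (n - 1) × Fin (n - 1)) (Fin (n - 1) × Fin (n - 1)) ℝ)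
    (hΓ : Γ = Matrix.of fun p p' =>
      if p = p' then (1 : ℝ)
      else if (p.1 = p'.1 ∧ p.2 ≠ p'.2) ∨ (p.1 ≠ p'.1 ∧ p.2 = p'.2) then
        -1 / (n - 1)
      else 1 / ((n : ℝ) - 1) ^ 2) :
    Γ.mulVec (fun _ => 1) = (1 / ((n : ℝ) - 1) ^ 2) • (fun _ => (1 : ℝ)) ∧
    (∀ i : Fin (n - 1), i ≠ ⟨0, by omega⟩ →
      Γ.mulVec (fun p => if p.1 = (⟨0, by omega⟩ : Fin (n - 1)) then (-1 : ℝ)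
          else if p.1 = i then 1 else 0) =
        ((n : ℝ) / ((n : ℝ) - 1) ^ 2) •
          (fun p => if p.1 = (⟨0, by omega⟩ : Fin (n - 1)) then (-1 : ℝ)
            else if p.1 = i then 1 else 0)) ∧
    (∀ j : Fin (n - 1), j ≠ ⟨0, by omega⟩ →
      Γ.mulVec (fun p => if p.2 = (⟨0, by omega⟩ : Fin (n - 1)) then (-1 : ℝ)
          else if p.2 = j then 1 else 0) =
        ((n : ℝ) / ((n : ℝ) - 1) ^ 2) •
          (fun p => if p.2 = (⟨0, by omega⟩ : Fin (n - 1)) then (-1 : ℝ)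
            else if p.2 = j then 1 else 0)) ∧
    (∀ i j : Fin (n - 1), i ≠ ⟨0, by omega⟩ → j ≠ ⟨0, by omega⟩ →
      Γ.mulVec (fun p =>
          if p = ((⟨0, by omega⟩ : Fin (n - 1)), (⟨0, by omega⟩ : Fin (n - 1)))
              ∨ p = (i, j) then (-1 : ℝ)
          else if p = ((⟨0, by omega⟩ : Fin (n - 1)), j)
              ∨ p = (i, (⟨0, by omega⟩ : Fin (n - 1))) then 1
          else 0) =
        ((1 + 1 / ((n : ℝ) - 1)) ^ 2) •
          (fun p =>
            if p = ((⟨0, by omega⟩ : Fin (n - 1)), (⟨0, by omega⟩ : Fin (n - 1)))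
                ∨ p = (i, j) then (-1 : ℝ)
            else if p = ((⟨0, by omega⟩ : Fin (n - 1)), j)
                ∨ p = (i, (⟨0, by omega⟩ : Fin (n - 1))) then 1
            else 0)) := by
  
  have hN : ((n : ℝ) - 1) ≠ 0 := by
    have h3 : (3:ℝ) ≤ (n:ℝ) := by exact_mod_cast hn
    nlinarith
  have hinv : (((n:ℝ)-1)^2)⁻¹ = (-1/((n:ℝ)-1)) * (-1/((n:ℝ)-1)) := by
    rw [div_mul_div_comm]
    field_simp
  have hfac : ∀ p p' : Fin (n-1) × Fin (n-1),
      Γ p p' = (if p.1 = p'.1 then (1:ℝ) else -1/((n:ℝ)-1))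
        * (if p.2 = p'.2 then (1:ℝ) else -1/((n:ℝ)-1)) := by
    intro p p'
    obtain ⟨a, b⟩ := p
    obtain ⟨a', b'⟩ := p'
    subst hΓ
    by_cases h1 : a = a' <;> by_cases h2 : b = b' <;>
      simp [Prod.ext_iff, h1, h2] <;> exact hinv
  have hmul : ∀ (f g : Fin (n-1) → ℝ) (p : Fin (n-1) × Fin (n-1)),
      Γ.mulVec (fun q => f q.1 * g q.2) p
      = ((1 + 1/((n:ℝ)-1)) * f p.1 - (1/((n:ℝ)-1)) * ∑ x, f x)
        * ((1 + 1/((n:ℝ)-1)) * g p.2 - (1/((n:ℝ)-1)) * ∑ x, g x) := by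
    intro f g p
    have e1 := rowsum_aux (n-1) (-1/((n:ℝ)-1)) f p.1
    have e2 := rowsum_aux (n-1) (-1/((n:ℝ)-1)) g p.2
    calc Γ.mulVec (fun q => f q.1 * g q.2) p
        = ∑ q : Fin (n-1) × Fin (n-1), Γ p q * (f q.1 * g q.2) := rfl
      _ = ∑ a : Fin (n-1), ∑ b : Fin (n-1),
            ((if p.1 = a then (1:ℝ) else -1/((n:ℝ)-1)) * f a)
            * ((if p.2 = b then (1:ℝ) else -1/((n:ℝ)-1)) * g b) := by
          rw [Fintype.sum_prod_type]
          refine Finset.sum_congr rfl fun a _ => Finset.sum_congr rfl fun b _ => ?_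
          rw [hfac]; ring
      _ = (∑ a : Fin (n-1), (if p.1 = a then (1:ℝ) else -1/((n:ℝ)-1)) * f a)
          * (∑ b : Fin (n-1), (if p.2 = b then (1:ℝ) else -1/((n:ℝ)-1)) * g b) := by
          rw [Finset.sum_mul_sum]
      _ = _ := by rw [e1, e2]; ring_nf
  have hsum1 : ∑ _x : Fin (n-1), (1:ℝ) = (n:ℝ) - 1 := by
    rw [Finset.sum_const]
    simp
    push_cast [Nat.cast_sub (by omega : 1 ≤ n)]
    ring
  refine ⟨?_, ?_, ?_, ?_⟩
  · funext p
    rw [show (fun _ : Fin (n-1) × Fin (n-1) => (1:ℝ))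
        = (fun q : Fin (n-1) × Fin (n-1) =>
          (fun _ : Fin (n-1) => (1:ℝ)) q.1 * (fun _ : Fin (n-1) => (1:ℝ)) q.2) by
      funext q; simp]
    rw [hmul (fun _ => 1) (fun _ => 1) p, hsum1]
    simp only [Pi.smul_apply, smul_eq_mul]
    field_simp
    ring
  · intro i hi
    set z : Fin (n-1) := ⟨0, by omega⟩ with hz
    have hveq : (fun p : Fin (n-1) × Fin (n-1) =>
        if p.1 = z then (-1:ℝ) else if p.1 = i then 1 else 0)
        = (fun q : Fin (n-1) × Fin (n-1) =>
          (fun x => if x = z then (-1:ℝ) else if x = i then 1 else 0) q.1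
          * (fun _ : Fin (n-1) => (1:ℝ)) q.2) := by
      funext q; simp
    funext p
    rw [hveq, hmul (fun x => if x = z then (-1:ℝ) else if x = i then 1 else 0)
      (fun _ => (1:ℝ)) p, hsum1, sum_delta_aux (n-1) i z hi (-1) 1]
    simp only [Pi.smul_apply, smul_eq_mul]
    field_simp
    ring
  · intro j hj
    set z : Fin (n-1) := ⟨0, by omega⟩ with hz
    have hveq : (fun p : Fin (n-1) × Fin (n-1) =>
        if p.2 = z then (-1:ℝ) else if p.2 = j then 1 else 0)
        = (fun q : Fin (n-1) × Fin (n-1) =>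
          (fun _ : Fin (n-1) => (1:ℝ)) q.1
          * (fun y => if y = z then (-1:ℝ) else if y = j then 1 else 0) q.2) := by
      funext q; simp
    funext p
    rw [hveq, hmul (fun _ => (1:ℝ))
      (fun y => if y = z then (-1:ℝ) else if y = j then 1 else 0) p, hsum1,
      sum_delta_aux (n-1) j z hj (-1) 1]
    simp only [Pi.smul_apply, smul_eq_mul]
    field_simp
    ring
  · intro i j hi hj
    set z : Fin (n-1) := ⟨0, by omega⟩ with hz
    have hveq := tensor_eq_aux (n-1) z i j hi hj
    funext p
    rw [hveq, hmul (fun x => if x = z then (1:ℝ) else if x = i then -1 else 0)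
      (fun y => if y = z then (-1:ℝ) else if y = j then 1 else 0) p,
      sum_delta_aux (n-1) i z hi 1 (-1), sum_delta_aux (n-1) j z hj (-1) 1]
    simp only [Pi.smul_apply, smul_eq_mul]
    ring
end
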